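/- arXiv:2106.16203 — 11 statements merged into one kernel-verified Lean document; each statement's English description precedes it below -/
import Mathlib

section
/- Every graph G satisfies N(K_4^-, G) ≤ (1/2)·C(|E(G)|, 2), where N(K_4^-, G) is the number of induced copies of K_4 minus an edge in G. -/
/-!
Each induced copy of `K₄⁻` on a vertex set `s` contains the two perfect matchings of `K₄⁻`,
i.e. two distinct pairs of edges of `G` whose vertices cover exactly `s`. A pair of edges covers
only one vertex set, so sending each 2-set of edges to the vertices it covers shows that
`2 · N(K₄⁻, G) ≤ C(|E(G)|, 2)`.
-/

/-- The number of induced copies of `F` in `G`: the number of vertex subsets of `G`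
whose induced subgraph is isomorphic to `F`. -/
noncomputable def inducedCount {α β : Type*} [Fintype α] [Fintype β]
    (F : SimpleGraph α) (G : SimpleGraph β) : ℕ :=
  Set.ncard {s : Finset β | Nonempty (G.induce (s : Set β) ≃g F)}

/-- The complete graph on `t` vertices minus the edge `{0,1}`. -/
def Kminus (t : ℕ) : SimpleGraph (Fin t) :=
  SimpleGraph.fromRel (fun a b => 2 ≤ a.val ∨ 2 ≤ b.val)

open Finset

namespace SimpleGraph

variable {V : Type*} [DecidableEq V]

def edgeSupport (p : Finset (Sym2 V)) : Finset V := p.biUnion Sym2.toFinset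

lemma edgeSupport_pair (a b c d : V) : edgeSupport {s(a, b), s(c, d)} = {a, b, c, d} := by
  ext; simp [edgeSupport, or_assoc]

lemma kminus_four_adj_of_two_le {a b : Fin 4} (hab : a ≠ b) (hb : 2 ≤ b.val) :
    (Kminus 4).Adj a b := by
  simp [Kminus, hab, hb]

variable [Fintype V] {G : SimpleGraph V} [DecidableRel G.Adj]

lemma pair_mem_powersetCard_edgeFinset {a b c d : V} (hab : G.Adj a b) (hcd : G.Adj c d)
    (hne : s(a, b) ≠ s(c, d)) : {s(a, b), s(c, d)} ∈ G.edgeFinset.powersetCard 2 := by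
  rw [mem_powersetCard, card_pair hne]
  exact ⟨by simp [insert_subset_iff, hab, hcd], rfl⟩

/-- The two witnesses are the perfect matchings `{02, 13}` and `{03, 12}` of `Kminus 4`. -/
lemma two_le_card_filter_edgeSupport_eq {s : Finset V} (e : G.induce (s : Set V) ≃g Kminus 4) :
    2 ≤ #{p ∈ G.edgeFinset.powersetCard 2 | edgeSupport p = s} := by
  set v : Fin 4 → V := fun k => e.symm k
  have hv : Function.Injective v := Subtype.val_injective.comp e.symm.injective
  have hadj (a b : Fin 4) (hab : a ≠ b) (hb : 2 ≤ b.val) : G.Adj (v a) (v b) := by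
    simpa using e.symm.map_rel_iff.mpr (kminus_four_adj_of_two_le hab hb)
  have hs : s = {v 0, v 1, v 2, v 3} := by
    ext x
    constructor
    · intro hx
      obtain ⟨k, rfl⟩ : ∃ k, v k = x := ⟨e ⟨x, hx⟩, by simp [v]⟩
      fin_cases k <;> simp
    · simp only [mem_insert, mem_singleton]
      rintro (rfl | rfl | rfl | rfl) <;> exact (e.symm _).2
  refine one_lt_card_iff.mpr
    ⟨{s(v 0, v 2), s(v 1, v 3)}, {s(v 0, v 3), s(v 1, v 2)}, ?_, ?_, ?_⟩
  · rw [mem_filter, edgeSupport_pair, hs]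
    refine ⟨pair_mem_powersetCard_edgeFinset (hadj 0 2 (by decide) le_rfl)
      (hadj 1 3 (by decide) (by decide)) (by simp [hv.eq_iff]), ?_⟩
    ext; simp; tauto
  · rw [mem_filter, edgeSupport_pair, hs]
    refine ⟨pair_mem_powersetCard_edgeFinset (hadj 0 3 (by decide) (by decide))
      (hadj 1 2 (by decide) le_rfl) (by simp [hv.eq_iff]), ?_⟩
    ext; simp; tauto
  · intro h
    have : s(v 0, v 2) ∈ ({s(v 0, v 3), s(v 1, v 2)} : Finset (Sym2 V)) := h ▸ by simp
    simp [hv.eq_iff] at this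

lemma two_mul_inducedCount_kminus_le :
    2 * inducedCount (Kminus 4) G ≤ (#G.edgeFinset).choose 2 := by
  classical
  set copies : Finset (Finset V) := {s | Nonempty (G.induce (s : Set V) ≃g Kminus 4)}
  have hcount : inducedCount (Kminus 4) G = #copies := by
    rw [inducedCount, ← Set.ncard_coe_finset]
    simp [copies]
  have hdouble := card_mul_le_card_mul' (s := G.edgeFinset.powersetCard 2) (t := copies)
    (m := 1) (fun p s => edgeSupport p = s)
    (fun s hs => two_le_card_filter_edgeSupport_eq (Nonempty.some (mem_filter.mp hs).2))
    (fun p _ => card_le_one.mpr fun s hs t ht =>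
      (mem_filter.mp hs).2.symm.trans (mem_filter.mp ht).2)
  rw [card_powersetCard] at hdouble
  rw [hcount]
  linarith

end SimpleGraph

open SimpleGraph in
theorem stmt0 {V : Type*} [Fintype V] (G : SimpleGraph V) :
    (inducedCount (Kminus 4) G : ℝ) ≤ (1 / 2) * (Nat.choose G.edgeSet.ncard 2 : ℝ) := by
  classical
  rw [← coe_edgeFinset, Set.ncard_coe_finset]
  have h : (2 * inducedCount (Kminus 4) G : ℝ) ≤ ((#G.edgeFinset).choose 2 : ℝ) := by
    exact_mod_cast two_mul_inducedCount_kminus_le (G := G)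
  linarith
end

section
/- For every graph G on n vertices, the sum over all vertices v of e(v), where e(v) is the number of edges inside the neighborhood of v, satisfies ∑_v e(v) ≥ ∑_v d(v)² − n·|E(G)|. -/
/-!
Inclusion–exclusion gives `d(x) + d(y) ≤ n + |N(x) ∩ N(y)|` for any two vertices. Summing this
over ordered pairs of adjacent vertices, the left side becomes `2 ∑ d(v)²`, the constant term
`2 n |E|`, and for fixed `x` the terms `|N(x) ∩ N(y)|`, `y ∈ N(x)`, are the degrees of the graph
induced on `N(x)`, so they add up to `2 e(x)`.
-/

open Finset

namespace SimpleGraph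

variable {V : Type*} [Fintype V] (G : SimpleGraph V) [DecidableRel G.Adj]

theorem sum_sum_neighborFinset {M : Type*} [AddCommMonoid M] (f : V → M) :
    ∑ x, ∑ y ∈ G.neighborFinset x, f y = ∑ y, G.degree y • f y := by
  rw [sum_comm' (t' := univ) (s' := fun y ↦ G.neighborFinset y) (by simp [adj_comm])]
  simp_rw [sum_const, card_neighborFinset_eq_degree]

variable [DecidableEq V]

theorem two_mul_card_edgeFinset_induce (s : Set V) [DecidablePred (· ∈ s)] :
    2 * #(G.induce s).edgeFinset = ∑ x ∈ s.toFinset, #(G.neighborFinset x ∩ s.toFinset) := by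
  rw [← sum_degrees_eq_twice_card_edges, ← sum_set_coe]
  simp_rw [← card_neighborFinset_eq_degree, ← map_neighborFinset_induce, card_map]

theorem two_mul_card_edgeFinset_induce_neighborSet (v : V) :
    2 * #(G.induce (G.neighborSet v)).edgeFinset
      = ∑ x ∈ G.neighborFinset v, #(G.neighborFinset v ∩ G.neighborFinset x) := by
  simp_rw [two_mul_card_edgeFinset_induce, ← neighborFinset_def, inter_comm]

theorem degree_add_degree_le_card_add_card_inter (x y : V) :
    G.degree x + G.degree y ≤ Fintype.card V + #(G.neighborFinset x ∩ G.neighborFinset y) := by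
  rw [← card_neighborFinset_eq_degree, ← card_neighborFinset_eq_degree,
    ← card_union_add_card_inter]
  exact Nat.add_le_add_right (card_le_univ _) _

theorem sum_sq_degree_le :
    ∑ v, G.degree v ^ 2
      ≤ ∑ v, #(G.induce (G.neighborSet v)).edgeFinset + Fintype.card V * #G.edgeFinset := by
  refine le_of_mul_le_mul_left ?_ two_pos
  calc 2 * ∑ v, G.degree v ^ 2
      = ∑ x, ∑ y ∈ G.neighborFinset x, (G.degree x + G.degree y) := by
        simp_rw [sum_add_distrib, sum_const, sum_sum_neighborFinset, card_neighborFinset_eq_degree,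
          smul_eq_mul, sq, two_mul]
    _ ≤ ∑ x, ∑ y ∈ G.neighborFinset x,
          (Fintype.card V + #(G.neighborFinset x ∩ G.neighborFinset y)) :=
        sum_le_sum fun x _ ↦ sum_le_sum fun y _ ↦
          G.degree_add_degree_le_card_add_card_inter x y
    _ = 2 * (∑ v, #(G.induce (G.neighborSet v)).edgeFinset
          + Fintype.card V * #G.edgeFinset) := by
        simp_rw [sum_add_distrib, sum_const, card_neighborFinset_eq_degree, smul_eq_mul, ← sum_mul,
          sum_degrees_eq_twice_card_edges, ← two_mul_card_edgeFinset_induce_neighborSet, ← mul_sum]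
        ring

end SimpleGraph

/-- Goodman's inequality: in a graph `G` on `n` vertices, the sum over all vertices `v`
of the number of edges inside the neighborhood of `v` is at least
`∑ d(v)² − n·|E(G)|`. -/
theorem stmt1 {V : Type*} [Fintype V] (G : SimpleGraph V) :
    (∑ v : V, ((G.induce (G.neighborSet v)).edgeSet.ncard : ℝ)) ≥
      (∑ v : V, ((G.neighborSet v).ncard : ℝ) ^ 2) -
        (Fintype.card V : ℝ) * (G.edgeSet.ncard : ℝ) := by
  classical
  simp_rw [ge_iff_le, sub_le_iff_le_add, Set.ncard_eq_toFinset_card',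
    ← SimpleGraph.neighborFinset_def, SimpleGraph.card_neighborFinset_eq_degree]
  exact_mod_cast G.sum_sq_degree_le
end

section
/- Every graph G on n vertices with x·n²/2 edges, where x ∈ [0,1], satisfies N(C_4, G) ≤ x(1−x)²·n⁴/8 + 2n³, where N(C_4, G) is the number of induced 4-cycles in G. -/
/-- The cycle on four vertices. -/
def C4 : SimpleGraph (Fin 4) := SimpleGraph.fromRel (fun a b => b = a + 1)

open Finset SimpleGraph

/-- AM–GM for `a * b`, `l ^ 3 / a` and `l ^ 3 / b`, whose product is `l ^ 6`. -/
lemma three_mul_sq_sub_cube_div_sub_cube_div_le_mul {a b l : ℝ} (ha : 0 < a) (hb : 0 < b)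
    (hl : 0 ≤ l) : 3 * l ^ 2 - l ^ 3 / a - l ^ 3 / b ≤ a * b := by
  obtain ⟨s, hs, rfl⟩ : ∃ s, 0 < s ∧ s ^ 2 = a := ⟨√a, by positivity, Real.sq_sqrt ha.le⟩
  obtain ⟨r, hr, rfl⟩ : ∃ r, 0 < r ∧ r ^ 2 = b := ⟨√b, by positivity, Real.sq_sqrt hb.le⟩
  have key : 0 ≤ s * r * (s * r - l) ^ 2 * (s * r + 2 * l) + l ^ 3 * (s - r) ^ 2 := by positivity
  have hsum : l ^ 3 / s ^ 2 + l ^ 3 / r ^ 2 = l ^ 3 * (s ^ 2 + r ^ 2) / (s ^ 2 * r ^ 2) := by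
    rw [div_add_div _ _ ha.ne' hb.ne']; ring
  have : 3 * l ^ 2 - s ^ 2 * r ^ 2 ≤ l ^ 3 * (s ^ 2 + r ^ 2) / (s ^ 2 * r ^ 2) := by
    rw [le_div_iff₀ (by positivity)]; nlinarith [key]
  linarith

instance : DecidableRel C4.Adj := fun a b =>
  decidable_of_iff' (a ≠ b ∧ (b = a + 1 ∨ a = b + 1)) (SimpleGraph.fromRel_adj _ a b)

/-- For `ε = ±1`, the map `i ↦ k + ε i` is an automorphism of `C4`. -/
lemma C4_adj_add_of_step : ∀ k ε : Fin 4, ε = 1 ∨ ε = 3 →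
    C4.Adj k (k + ε) ∧ C4ᶜ.Adj k (k + 2 * ε) ∧ C4ᶜ.Adj (k + ε) (k + 3 * ε) ∧
      ({k, k + ε, k + 2 * ε, k + 3 * ε} : Finset (Fin 4)) = univ := by
  decide

namespace SimpleGraph

variable {V : Type*} [Fintype V] (G : SimpleGraph V) [DecidableRel G.Adj]

lemma sum_sum_neighborFinset_comm {M : Type*} [AddCommMonoid M] (f : V → V → M) :
    ∑ u, ∑ v ∈ G.neighborFinset u, f u v = ∑ v, ∑ u ∈ G.neighborFinset v, f u v :=
  sum_comm' fun u v => by simp [G.adj_comm]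

lemma sum_sum_neighborFinset_eq_sum_degree_smul {M : Type*} [AddCommMonoid M] (f : V → M) :
    ∑ u, ∑ v ∈ G.neighborFinset u, f v = ∑ v, G.degree v • f v := by
  rw [sum_sum_neighborFinset_comm]
  simp only [sum_const, card_neighborFinset_eq_degree]

lemma sum_sum_neighborFinset_add (f : V → ℝ) :
    ∑ u, ∑ v ∈ G.neighborFinset u, (f u + f v) = ∑ v, G.degree v * (2 * f v) := by
  simp only [sum_add_distrib, sum_const, card_neighborFinset_eq_degree,
    G.sum_sum_neighborFinset_eq_sum_degree_smul f, nsmul_eq_mul]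
  rw [← sum_add_distrib]
  exact sum_congr rfl fun v _ => by ring

lemma sum_degree_mul_inv_le_card : ∑ v, (G.degree v : ℝ) * (G.degree v : ℝ)⁻¹ ≤ Fintype.card V :=
  (sum_le_sum fun v _ => mul_inv_le_one).trans_eq (by simp)

lemma three_mul_sq_mul_sum_degree_sub_le {l : ℝ} (hl : 0 ≤ l) :
    3 * l ^ 2 * ∑ v, (G.degree v : ℝ) - 2 * l ^ 3 * Fintype.card V ≤
      ∑ u, ∑ v ∈ G.neighborFinset u, (G.degree u : ℝ) * G.degree v := by
  have hpos : ∀ u v, G.Adj u v → (0 : ℝ) < G.degree u := fun u v h =>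
    Nat.cast_pos.mpr (G.degree_pos_iff_exists_adj u |>.mpr ⟨v, h⟩)
  let f : V → ℝ := fun v => 3 * l ^ 2 / 2 - l ^ 3 / G.degree v
  calc 3 * l ^ 2 * ∑ v, (G.degree v : ℝ) - 2 * l ^ 3 * Fintype.card V
      ≤ 3 * l ^ 2 * ∑ v, (G.degree v : ℝ)
          - 2 * l ^ 3 * ∑ v, (G.degree v : ℝ) * (G.degree v : ℝ)⁻¹ := by
        nlinarith [G.sum_degree_mul_inv_le_card, pow_nonneg hl 3]
    _ = ∑ v, G.degree v * (2 * f v) := by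
        rw [mul_sum, mul_sum, ← sum_sub_distrib]
        exact sum_congr rfl fun v _ => by ring
    _ = ∑ u, ∑ v ∈ G.neighborFinset u, (f u + f v) := (G.sum_sum_neighborFinset_add f).symm
    _ ≤ _ := sum_le_sum fun u _ => sum_le_sum fun v hv => by
        have huv := (G.mem_neighborFinset u v).mp hv
        simp only [f]
        linarith [three_mul_sq_sub_cube_div_sub_cube_div_le_mul (hpos u v huv)
          (hpos v u huv.symm) hl]

/-- Blakley–Roy inequality for walks of length three. -/
theorem sum_degree_pow_three_le :
    (∑ v, (G.degree v : ℝ)) ^ 3 ≤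
      Fintype.card V ^ 2 * ∑ u, ∑ v ∈ G.neighborFinset u, (G.degree u : ℝ) * G.degree v := by
  rcases (Fintype.card V).eq_zero_or_pos with hn | hn
  · have : IsEmpty V := Fintype.card_eq_zero_iff.mp hn
    simp
  set m := ∑ v, (G.degree v : ℝ)
  have hn' : (0 : ℝ) < Fintype.card V := Nat.cast_pos.mpr hn
  have h := G.three_mul_sq_mul_sum_degree_sub_le (l := m / Fintype.card V)
    (div_nonneg (sum_nonneg fun v _ => Nat.cast_nonneg _) hn'.le)
  refine (div_le_iff₀' (by positivity)).mp (Eq.trans_le ?_ h)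
  field_simp
  ring

variable [DecidableEq V]

lemma sum_eq_add_sum_neighborFinset_add_sum_compl {M : Type*} [AddCommMonoid M] (f : V → M)
    (u : V) :
    ∑ v, f v = f u + ∑ v ∈ G.neighborFinset u, f v + ∑ v ∈ Gᶜ.neighborFinset u, f v := by
  have hu : u ∈ (G.neighborFinset u)ᶜ := by simp
  rw [neighborFinset_compl, sdiff_singleton_eq_erase, ← sum_add_sum_compl (G.neighborFinset u),
    ← add_sum_erase _ f hu]
  abel

lemma sq_sum_eq (c : V → ℝ) :
    (∑ v, c v) ^ 2 = ∑ v, c v ^ 2 + ∑ u, ∑ v ∈ G.neighborFinset u, c u * c v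
      + ∑ u, ∑ v ∈ Gᶜ.neighborFinset u, c u * c v := by
  calc (∑ v, c v) ^ 2 = ∑ u, c u * ∑ v, c v := by rw [sq, sum_mul]
    _ = ∑ u, (c u ^ 2 + ∑ v ∈ G.neighborFinset u, c u * c v
          + ∑ v ∈ Gᶜ.neighborFinset u, c u * c v) := by
        refine sum_congr rfl fun u _ => ?_
        rw [G.sum_eq_add_sum_neighborFinset_add_sum_compl c u, mul_add, mul_add, mul_sum, mul_sum,
          sq]
    _ = _ := by rw [sum_add_distrib, sum_add_distrib]

lemma degree_compl_add_degree (v : V) :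
    (Gᶜ.degree v : ℝ) + G.degree v = Fintype.card V - 1 := by
  have h := G.degree_lt_card_verts v
  rw [degree_compl, Nat.cast_sub (by omega), Nat.cast_sub (by omega)]
  push_cast
  ring

def edgeWithNonNeighbours : Finset (V × V × V × V) :=
  {t | G.Adj t.1 t.2.1 ∧ Gᶜ.Adj t.1 t.2.2.1 ∧ Gᶜ.Adj t.2.1 t.2.2.2}

lemma card_edgeWithNonNeighbours_le :
    #G.edgeWithNonNeighbours ≤
      ∑ u, ∑ v ∈ G.neighborFinset u, Gᶜ.degree u * Gᶜ.degree v := by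
  have hsub : G.edgeWithNonNeighbours ⊆ univ.biUnion fun u => (G.neighborFinset u).biUnion
      fun v => {u} ×ˢ {v} ×ˢ Gᶜ.neighborFinset u ×ˢ Gᶜ.neighborFinset v := by
    rintro ⟨a, u, b, w⟩ ht
    simp only [edgeWithNonNeighbours, mem_filter, mem_univ, true_and] at ht
    simpa using ht
  refine (card_le_card hsub).trans <| card_biUnion_le.trans <| sum_le_sum fun u _ =>
    card_biUnion_le.trans_eq <| sum_congr rfl fun v _ => ?_
  simp [card_neighborFinset_eq_degree]

lemma eight_le_card_filter_edgeWithNonNeighbours {s : Finset V}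
    (e : G.induce (s : Set V) ≃g C4) :
    8 ≤ #{t ∈ G.edgeWithNonNeighbours | {t.1, t.2.1, t.2.2.1, t.2.2.2} = s} := by
  let φ : C4 ↪g G := (Embedding.induce (s : Set V)).comp e.symm.toEmbedding
  have hφ : univ.image φ = s := by
    ext v
    simp only [mem_image, mem_univ, true_and]
    refine ⟨fun ⟨i, hi⟩ => hi ▸ (e.symm i).2, fun hv => ⟨e ⟨v, hv⟩, by simp [φ]⟩⟩
  let ψ : Fin 4 × Fin 4 → V × V × V × V :=
    fun q => (φ q.1, φ (q.1 + q.2), φ (q.1 + 2 * q.2), φ (q.1 + 3 * q.2))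
  have hmaps : ∀ q ∈ (univ ×ˢ {1, 3} : Finset (Fin 4 × Fin 4)),
      ψ q ∈ {t ∈ G.edgeWithNonNeighbours | {t.1, t.2.1, t.2.2.1, t.2.2.2} = s} := by
    rintro ⟨k, ε⟩ hq
    obtain ⟨h1, h2, h3, h4⟩ := C4_adj_add_of_step k ε (by simpa using hq)
    simp only [edgeWithNonNeighbours, mem_filter, mem_univ, true_and, ψ, φ.map_adj_iff]
    refine ⟨⟨h1, (Embedding.complEquiv φ).map_adj_iff.mpr h2,
      (Embedding.complEquiv φ).map_adj_iff.mpr h3⟩, ?_⟩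
    rw [← hφ, ← h4]
    simp [image_insert]
  have hinj : Set.InjOn ψ (univ ×ˢ {1, 3} : Finset (Fin 4 × Fin 4)) := by
    rintro ⟨k, ε⟩ - ⟨k', ε'⟩ - h
    simp only [ψ, Prod.mk.injEq, φ.injective.eq_iff] at h
    obtain ⟨rfl, h, -⟩ := h
    simpa using h
  exact card_le_card_of_injOn ψ hmaps hinj

lemma sum_degree_compl_add_sum_degree :
    ∑ v, (Gᶜ.degree v : ℝ) + ∑ v, (G.degree v : ℝ) = Fintype.card V * (Fintype.card V - 1) := by
  simp only [← sum_add_distrib, degree_compl_add_degree, sum_const, card_univ, nsmul_eq_mul]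

lemma inducedCount_C4_mul_eight_le : inducedCount C4 G * 8 ≤ #G.edgeWithNonNeighbours := by
  classical
  rw [inducedCount, Set.ncard_eq_toFinset_card', Set.toFinset_ofPred]
  refine (card_mul_le_card_mul (fun s t => {t.1, t.2.1, t.2.2.1, t.2.2.2} = s)
    (fun s hs => ?_) (fun t _ => ?_)).trans_eq (mul_one _)
  · obtain ⟨e⟩ := (mem_filter.mp hs).2
    exact G.eight_le_card_filter_edgeWithNonNeighbours e
  · exact card_le_one.mpr fun s hs s' hs' => (mem_filter.mp hs).2.symm.trans (mem_filter.mp hs').2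

theorem eight_mul_card_sq_mul_inducedCount_C4_le :
    8 * (Fintype.card V : ℝ) ^ 2 * inducedCount C4 G ≤
      (∑ v, (Gᶜ.degree v : ℝ)) ^ 2 * ∑ v, (G.degree v : ℝ) := by
  set n : ℝ := (Fintype.card V : ℝ)
  set K := ∑ v, (Gᶜ.degree v : ℝ)
  set Q := ∑ v, (Gᶜ.degree v : ℝ) ^ 2
  set S := ∑ u, ∑ v ∈ G.neighborFinset u, (Gᶜ.degree u : ℝ) * Gᶜ.degree v
  set W := ∑ u, ∑ v ∈ Gᶜ.neighborFinset u, (Gᶜ.degree u : ℝ) * Gᶜ.degree v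
  have hcount : 8 * (inducedCount C4 G : ℝ) ≤ S := by
    have := G.inducedCount_C4_mul_eight_le.trans G.card_edgeWithNonNeighbours_le
    rw [mul_comm]
    simp only [S]
    exact_mod_cast this
  have hsplit : K ^ 2 = Q + S + W := G.sq_sum_eq _
  have hQ : K ^ 2 ≤ n * Q := by
    simpa using sq_sum_le_card_mul_sum_sq (s := univ) (f := fun v => (Gᶜ.degree v : ℝ))
  have hW : K ^ 3 ≤ n ^ 2 * W := Gᶜ.sum_degree_pow_three_le
  have hKD := G.sum_degree_compl_add_sum_degree
  have hn : 0 ≤ n := Nat.cast_nonneg _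
  calc 8 * n ^ 2 * inducedCount C4 G ≤ n ^ 2 * S := by nlinarith
    _ = n ^ 2 * K ^ 2 - n * (n * Q) - n ^ 2 * W := by rw [hsplit]; ring
    _ ≤ n ^ 2 * K ^ 2 - n * K ^ 2 - K ^ 3 := by nlinarith
    _ = K ^ 2 * ∑ v, (G.degree v : ℝ) := by rw [← sub_eq_of_eq_add' hKD.symm]; ring

theorem inducedCount_C4_le {x : ℝ}
    (hE : (G.edgeSet.ncard : ℝ) = x * Fintype.card V ^ 2 / 2) :
    (inducedCount C4 G : ℝ) ≤ x * (1 - x) ^ 2 * Fintype.card V ^ 4 / 8 := by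
  have hD : ∑ v, (G.degree v : ℝ) = x * Fintype.card V ^ 2 := by
    rw [← Nat.cast_sum, G.sum_degrees_eq_twice_card_edges, ← Set.ncard_coe_finset,
      G.coe_edgeFinset]
    push_cast
    linarith
  rcases (Fintype.card V).eq_zero_or_pos with hV | hV
  · have : IsEmpty V := Fintype.card_eq_zero_iff.mp hV
    have h := G.inducedCount_C4_mul_eight_le
    rw [edgeWithNonNeighbours, univ_eq_empty, filter_empty, card_empty] at h
    simp [show inducedCount C4 G = 0 by omega]
  have hK : ∑ v, (Gᶜ.degree v : ℝ) + Fintype.card V = (1 - x) * Fintype.card V ^ 2 := by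
    linear_combination G.sum_degree_compl_add_sum_degree - hD
  have hK0 : 0 ≤ ∑ v, (Gᶜ.degree v : ℝ) := sum_nonneg fun v _ => Nat.cast_nonneg _
  have hD0 : 0 ≤ x * Fintype.card V ^ 2 := hD ▸ sum_nonneg fun v _ => Nat.cast_nonneg _
  have hKsq : (∑ v, (Gᶜ.degree v : ℝ)) ^ 2 ≤ ((1 - x) * Fintype.card V ^ 2) ^ 2 :=
    pow_le_pow_left₀ hK0 (by linarith) 2
  have key := G.eight_mul_card_sq_mul_inducedCount_C4_le
  rw [hD] at key
  have hV' : (0 : ℝ) < Fintype.card V ^ 2 := by positivity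
  rw [le_div_iff₀ (by norm_num), ← mul_le_mul_iff_right₀ hV']
  nlinarith [mul_le_mul_of_nonneg_right hKsq hD0]

end SimpleGraph

theorem stmt3_general {V : Type*} [Fintype V] (G : SimpleGraph V) (n : ℕ) (x : ℝ)
    (hn : n = Fintype.card V)
    (hE : (G.edgeSet.ncard : ℝ) = x * n ^ 2 / 2) :
    (inducedCount C4 G : ℝ) ≤ x * (1 - x) ^ 2 * n ^ 4 / 8 + 2 * n ^ 3 := by
  classical
  subst hn
  exact (G.inducedCount_C4_le hE).trans (le_add_of_nonneg_right (by positivity))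

/-- Every graph `G` on `n` vertices with `x·n²/2` edges, `x ∈ [0,1]`, has at most
`x(1−x)²·n⁴/8 + 2n³` induced four-cycles. -/
theorem stmt3 {V : Type*} [Fintype V] (G : SimpleGraph V) (n : ℕ) (x : ℝ)
    (hn : n = Fintype.card V) (hx0 : 0 ≤ x) (hx1 : x ≤ 1)
    (hE : (G.edgeSet.ncard : ℝ) = x * n ^ 2 / 2) :
    (inducedCount C4 G : ℝ) ≤ x * (1 - x) ^ 2 * n ^ 4 / 8 + 2 * n ^ 3 :=
  stmt3_general G n x hn hE
end

section
/- Let t ≥ s ≥ 2 be integers. Then every graph G satisfies N(K_{s,t}, G) ≤ ((t−s+1)!/(s!·t!)) · N(S_{t−s+1}, G) · |E(G)|^{s−1}. -/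
open Finset

lemma Equiv.Perm.eq_of_apply_succ_eq {n : ℕ} {π σ : Equiv.Perm (Fin (n + 1))}
    (h : ∀ i : Fin n, π i.succ = σ i.succ) : π = σ := by
  have h0 : π 0 = σ 0 := by
    by_contra hne
    obtain ⟨i, hi⟩ := Fin.exists_succ_eq.2 fun h0 : σ.symm (π 0) = 0 => hne (σ.symm_apply_eq.1 h0)
    have : π 0 = π i.succ := by rw [h, hi, Equiv.apply_symm_apply]
    exact Fin.succ_ne_zero i (π.injective this).symm
  exact Equiv.ext (Fin.cases h0 h)

namespace SimpleGraph

protected def Embedding.completeBipartiteGraph {α β γ δ : Type*} (f : α ↪ γ) (g : β ↪ δ) :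
    completeBipartiteGraph α β ↪g completeBipartiteGraph γ δ where
  toEmbedding := f.sumMap g
  map_rel_iff' := by rintro (a | b) (a' | b') <;> simp

@[simp] lemma Embedding.coe_completeBipartiteGraph {α β γ δ : Type*} (f : α ↪ γ) (g : β ↪ δ) :
    ⇑(Embedding.completeBipartiteGraph f g) = Sum.map f g := rfl

variable {V α : Type*} {F : SimpleGraph α} {G : SimpleGraph V}

lemma nonempty_induce_map_univ_iso [Fintype α] (e : F ↪g G) :
    Nonempty (G.induce ((univ.map e.toEmbedding : Finset V) : Set V) ≃g F) := by
  rw [coe_map, coe_univ, Set.image_univ]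
  exact ⟨e.isoInduceRange.symm⟩

noncomputable def Embedding.ofInduceIso {W : Set V} (h : Nonempty (G.induce W ≃g F)) : F ↪g G :=
  (Embedding.induce W).comp h.some.symm.toEmbedding

lemma Embedding.range_ofInduceIso {W : Set V} (h : Nonempty (G.induce W ≃g F)) :
    Set.range (Embedding.ofInduceIso h) = W := by
  simp only [Embedding.ofInduceIso, RelEmbedding.coe_trans, Set.range_comp,
    RelIso.coe_toRelEmbedding, EquivLike.range_eq_univ, Set.image_univ]
  exact Subtype.range_coe

section StarAndMatching

variable {n m : ℕ} (e : completeBipartiteGraph (Fin (n + 1)) (Fin (n + m)) ↪g G)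
  (π : Equiv.Perm (Fin (n + 1))) (f : Fin n ↪ Fin (n + m))

lemma card_compl_map_univ : #(univ.map f)ᶜ = m := by
  simp [card_compl]

noncomputable def starEmbedding : completeBipartiteGraph (Fin 1) (Fin m) ↪g G :=
  e.comp <| Embedding.completeBipartiteGraph ⟨fun _ => π 0, Function.injective_of_subsingleton _⟩
    ((univ.map f)ᶜ.orderEmbOfFin (card_compl_map_univ f)).toEmbedding

def matchingEdge (i : Fin n) : G.edgeSet :=
  ⟨s(e (.inl (π i.succ)), e (.inr (f i))), by simp⟩

lemma range_eq_range_starEmbedding_union :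
    Set.range e =
      Set.range (starEmbedding e π f) ∪ ⋃ i, {v | v ∈ (matchingEdge e π f i : Sym2 V)} := by
  apply Set.Subset.antisymm
  · rintro _ ⟨x | y, rfl⟩
    · rcases Fin.eq_zero_or_eq_succ (π.symm x) with hx | ⟨i, hx⟩
      · left
        exact ⟨.inl 0, by simp [starEmbedding, ← hx]⟩
      · right
        exact Set.mem_iUnion.2 ⟨i, by simp [matchingEdge, ← hx]⟩
    · by_cases hy : y ∈ (univ.map f)ᶜ
      · left
        obtain ⟨j, rfl⟩ : y ∈ Set.range ((univ.map f)ᶜ.orderEmbOfFin (card_compl_map_univ f)) := by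
          rwa [range_orderEmbOfFin]
        exact ⟨.inr j, by simp [starEmbedding]⟩
      · right
        obtain ⟨i, -, rfl⟩ := mem_map.1 (notMem_compl.1 hy)
        exact Set.mem_iUnion.2 ⟨i, by simp [matchingEdge]⟩
  · rintro _ (⟨x, rfl⟩ | hv)
    · exact ⟨_, rfl⟩
    · obtain ⟨i, hi⟩ := Set.mem_iUnion.1 hv
      rcases Sym2.mem_iff.1 hi with rfl | rfl <;> exact ⟨_, rfl⟩

lemma eq_of_matchingEdge_eq {π' : Equiv.Perm (Fin (n + 1))} {f' : Fin n ↪ Fin (n + m)}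
    (h : ∀ i, matchingEdge e π f i = matchingEdge e π' f' i) : π = π' ∧ f = f' := by
  have hi : ∀ i, π i.succ = π' i.succ ∧ f i = f' i := fun i => by
    simpa [matchingEdge, Sym2.eq_iff] using h i
  exact ⟨Equiv.Perm.eq_of_apply_succ_eq fun i => (hi i).1, DFunLike.ext _ _ fun i => (hi i).2⟩

end StarAndMatching

open Nat in
theorem inducedCount_completeBipartiteGraph_mul_le [Fintype V] (n m : ℕ) (G : SimpleGraph V) :
    inducedCount (completeBipartiteGraph (Fin (n + 1)) (Fin (n + m))) G *
        ((n + 1)! * (n + m).descFactorial n) ≤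
      inducedCount (completeBipartiteGraph (Fin 1) (Fin m)) G * G.edgeSet.ncard ^ n := by
  let A := {W : Finset V |
    Nonempty (G.induce (W : Set V) ≃g completeBipartiteGraph (Fin (n + 1)) (Fin (n + m)))}
  let B := {W : Finset V |
    Nonempty (G.induce (W : Set V) ≃g completeBipartiteGraph (Fin 1) (Fin m))}
  let Φ : A × Equiv.Perm (Fin (n + 1)) × (Fin n ↪ Fin (n + m)) → B × (Fin n → G.edgeSet) :=
    fun ⟨W, π, f⟩ =>
      (⟨univ.map (starEmbedding (Embedding.ofInduceIso W.2) π f).toEmbedding,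
        nonempty_induce_map_univ_iso _⟩, matchingEdge (Embedding.ofInduceIso W.2) π f)
  have hΦ : Φ.Injective := by
    rintro ⟨⟨W, hW⟩, π, f⟩ ⟨⟨W', hW'⟩, π', f'⟩ h
    simp only [Φ, Prod.mk.injEq, Subtype.mk.injEq] at h
    obtain ⟨hstar, hedge⟩ := h
    have hrange := congrArg ((↑) : Finset V → Set V) hstar
    simp only [coe_map, coe_univ, Set.image_univ, RelEmbedding.coe_toEmbedding] at hrange
    obtain rfl : W = W' := by
      apply Finset.coe_injective
      rw [← Embedding.range_ofInduceIso hW, ← Embedding.range_ofInduceIso hW',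
        range_eq_range_starEmbedding_union _ π f, range_eq_range_starEmbedding_union _ π' f',
        hrange, hedge]
    obtain ⟨rfl, rfl⟩ := eq_of_matchingEdge_eq _ _ _ (congrFun hedge)
    rfl
  have hcard := Nat.card_le_card_of_injective Φ hΦ
  simpa [inducedCount, A, B, Nat.card_coe_set_eq, Nat.card_fun, Fintype.card_perm,
    Fintype.card_embedding_eq, mul_comm] using hcard

end SimpleGraph

/-- For `t ≥ s ≥ 2`, every graph `G` satisfies
`N(K_{s,t}, G) ≤ ((t−s+1)!/(s!·t!)) · N(S_{t−s+1}, G) · |E(G)|^{s−1}`,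
where `S_k = K_{1,k}` is the star with `k` edges. -/
theorem stmt4 (s t : ℕ) (hs : 2 ≤ s) (hst : s ≤ t)
    {V : Type*} [Fintype V] (G : SimpleGraph V) :
    (inducedCount (completeBipartiteGraph (Fin s) (Fin t)) G : ℝ) ≤
      ((t - s + 1).factorial : ℝ) / ((s.factorial : ℝ) * (t.factorial : ℝ)) *
        (inducedCount (completeBipartiteGraph (Fin 1) (Fin (t - s + 1))) G : ℝ) *
        (G.edgeSet.ncard : ℝ) ^ (s - 1) := by
  obtain ⟨n, rfl⟩ : ∃ n, s = n + 1 := ⟨s - 1, by omega⟩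
  obtain ⟨m, rfl⟩ : ∃ m, t = n + m := ⟨t - n, by omega⟩
  have key := SimpleGraph.inducedCount_completeBipartiteGraph_mul_le n m G
  have hD : 0 < (n + 1).factorial * (n + m).descFactorial n :=
    Nat.mul_pos (Nat.factorial_pos _) (Nat.descFactorial_pos.2 (Nat.le_add_right n m))
  rw [← Nat.cast_le (α := ℝ), Nat.cast_mul, Nat.cast_mul, ← le_div_iff₀ (mod_cast hD)] at key
  rw [show n + m - (n + 1) + 1 = m by omega, Nat.add_sub_cancel,
    ← Nat.factorial_mul_descFactorial (Nat.le_add_right n m), Nat.add_sub_cancel_left]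
  refine key.trans_eq ?_
  push_cast
  field_simp
end

section
/- Let s ≥ 1 be an integer and λ, μ real numbers such that for every positive integer r, (1/r^{s+1})·C(r−1, s) ≤ λ·(r−1)/(2r) + μ. Then for every m ≥ 1 and every (α_1, ..., α_m) in the standard simplex (α_i ≥ 0, ∑α_i = 1), we have ∑_{i=1}^m ∑_{W} α_i² ∏_{j∈W} α_j ≤ λ·∑_{i<j} α_i α_j + μ, where the inner sum runs over all s-element subsets W of [m]\{i}. -/
/-!
With `e_k` the elementary symmetric polynomials, `∑_i α_i² e_s(α without α_i)` equals
`e_1 e_{s+1} - (s+2) e_{s+2}` and `∑_{i<j} α_i α_j = e_2`. Along a line on which `α_i + α_j` and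
all other coordinates are fixed, every `e_k` is an affine function of `α_i α_j`, hence so is the
objective `F = LHS - λ e_2`. Take a maximiser of `F` on the simplex with the fewest nonzero
coordinates, and two of its nonzero coordinates `i, j`; along their line `F = K + σ α_i α_j`. If
`σ ≤ 0`, moving all of `α_i` onto `α_j` does not decrease `F` but shrinks the support; so `σ > 0`,
and then `α_i = α_j`, since the product is largest when the two are equal. The maximiser is thus
uniform on `r` coordinates, where `F = C(r-1,s)/r^{s+1} - λ(r-1)/(2r) ≤ μ`.
-/

open Finset

namespace Finset

variable {ι R : Type*} [CommRing R]

def esymm (T : Finset ι) (β : ι → R) (k : ℕ) : R :=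
  ∑ W ∈ T.powersetCard k, ∏ j ∈ W, β j

variable {T : Finset ι} {β γ : ι → R} {i j : ι} {k : ℕ}

@[simp] theorem esymm_zero : T.esymm β 0 = 1 := by
  simp [esymm]

theorem esymm_one : T.esymm β 1 = ∑ j ∈ T, β j := by
  simp [esymm, powersetCard_one]

theorem esymm_congr (h : ∀ j ∈ T, β j = γ j) : T.esymm β k = T.esymm γ k :=
  sum_congr rfl fun _ hW => prod_congr rfl fun j hj => h j ((mem_powersetCard.1 hW).1 hj)

theorem esymm_filter_ne_zero [DecidableEq R] : (T.filter (β · ≠ 0)).esymm β k = T.esymm β k := by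
  refine sum_subset (powersetCard_mono (filter_subset _ _)) fun W hW hW' => ?_
  rw [mem_powersetCard] at hW hW'
  obtain ⟨j, hjW, hj⟩ : ∃ j ∈ W, β j = 0 := by
    by_contra! h
    exact hW' ⟨fun j hjW => mem_filter.2 ⟨hW.1 hjW, h j hjW⟩, hW.2⟩
  exact prod_eq_zero hjW hj

theorem esymm_eq_choose_mul_pow [DecidableEq R] {v : R} (h : ∀ j ∈ T, β j = 0 ∨ β j = v) :
    T.esymm β k = (#{j ∈ T | β j ≠ 0}).choose k * v ^ k := by
  have hv : ∀ j ∈ T.filter (β · ≠ 0), β j = v := fun j hj =>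
    (h j (mem_filter.1 hj).1).resolve_left (mem_filter.1 hj).2
  rw [← esymm_filter_ne_zero, esymm, ← card_powersetCard, ← nsmul_eq_mul, ← sum_const]
  refine sum_congr rfl fun W hW => ?_
  rw [mem_powersetCard] at hW
  rw [prod_congr rfl fun j hj => hv j (hW.1 hj), prod_const, hW.2]

variable [DecidableEq ι]

theorem esymm_succ_of_mem (hj : j ∈ T) :
    T.esymm β (k + 1) = (T.erase j).esymm β (k + 1) + β j * (T.erase j).esymm β k := by
  obtain ⟨T, hjT, rfl⟩ : ∃ T', j ∉ T' ∧ T = insert j T' :=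
    ⟨T.erase j, notMem_erase j T, (insert_erase hj).symm⟩
  rw [erase_insert hjT, esymm, powersetCard_succ_insert hjT, sum_union, sum_image]
  · rw [esymm, esymm, mul_sum]
    congr 1
    exact sum_congr rfl fun W hW => prod_insert fun hjW => hjT ((mem_powersetCard.1 hW).1 hjW)
  · intro W hW W' hW' hWW'
    simp only [mem_coe, mem_powersetCard] at hW hW'
    rw [← erase_insert fun h => hjT (hW.1 h), hWW', erase_insert fun h => hjT (hW'.1 h)]
  · refine disjoint_left.2 fun W hW hW' => ?_
    obtain ⟨W', -, rfl⟩ := mem_image.1 hW'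
    exact hjT ((mem_powersetCard.1 hW).1 (mem_insert_self j W'))

theorem esymm_add_two_of_mem (hi : i ∈ T) (hj : j ∈ T) (hij : i ≠ j) :
    T.esymm β (k + 2) = ((T.erase i).erase j).esymm β (k + 2)
      + (β i + β j) * ((T.erase i).erase j).esymm β (k + 1)
      + β i * β j * ((T.erase i).erase j).esymm β k := by
  have hj' : j ∈ T.erase i := mem_erase.2 ⟨hij.symm, hj⟩
  rw [esymm_succ_of_mem hi, esymm_succ_of_mem hj', esymm_succ_of_mem hj']
  ring

theorem sum_mul_esymm_erase :
    ∑ i ∈ T, β i * (T.erase i).esymm β k = (k + 1) * T.esymm β (k + 1) := by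
  calc ∑ i ∈ T, β i * (T.erase i).esymm β k
      = ∑ i ∈ T, ∑ U ∈ T.powersetCard (k + 1) with i ∈ U, ∏ j ∈ U, β j := by
        refine sum_congr rfl fun i hi => ?_
        rw [esymm, mul_sum]
        refine sum_nbij' (insert i) (·.erase i) ?_ ?_ ?_ ?_ ?_
        · intro W hW
          simp only [mem_powersetCard, subset_erase] at hW
          simp [mem_powersetCard, insert_subset_iff, hi, hW.1.1, card_insert_of_notMem hW.1.2, hW.2]
        · intro U hU
          simp only [mem_filter, mem_powersetCard] at hU
          simp [mem_powersetCard, erase_subset_erase i hU.1.1, card_erase_of_mem hU.2, hU.1.2]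
        · intro W hW
          simp only [mem_powersetCard, subset_erase] at hW
          exact erase_insert hW.1.2
        · intro U hU
          exact insert_erase (mem_filter.1 hU).2
        · intro W hW
          simp only [mem_powersetCard, subset_erase] at hW
          rw [prod_insert hW.1.2]
    _ = ∑ U ∈ T.powersetCard (k + 1), ∑ i ∈ U, ∏ j ∈ U, β j := by
        refine sum_comm' fun i U => ?_
        simp only [mem_filter, mem_powersetCard]
        exact ⟨fun h => ⟨h.2.2, h.2.1⟩, fun h => ⟨h.2.1 h.1, h.2, h.1⟩⟩
    _ = (k + 1) * T.esymm β (k + 1) := by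
        rw [esymm, mul_sum]
        refine sum_congr rfl fun U hU => ?_
        rw [sum_const, (mem_powersetCard.1 hU).2, nsmul_eq_mul]
        push_cast
        ring

end Finset

section

variable {ι R : Type*} [DecidableEq ι] [CommRing R]

def PairAffine (F : (ι → R) → R) : Prop :=
  ∀ β i j, i ≠ j → ∃ K σ : R, ∀ x y, x + y = β i + β j →
    F (Function.update (Function.update β i x) j y) = K + σ * (x * y)

theorem PairAffine.sub {F G : (ι → R) → R} (hF : PairAffine F) (hG : PairAffine G) :
    PairAffine fun β => F β - G β := by
  intro β i j hij
  obtain ⟨K, σ, hKσ⟩ := hF β i j hij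
  obtain ⟨L, τ, hLτ⟩ := hG β i j hij
  exact ⟨K - L, σ - τ, fun x y hxy => by dsimp only; rw [hKσ x y hxy, hLτ x y hxy]; ring⟩

theorem PairAffine.const_mul {F : (ι → R) → R} (hF : PairAffine F) (c : R) :
    PairAffine fun β => c * F β := by
  intro β i j hij
  obtain ⟨K, σ, hKσ⟩ := hF β i j hij
  exact ⟨c * K, c * σ, fun x y hxy => by dsimp only; rw [hKσ x y hxy]; ring⟩

end

section

variable {ι R : Type*} [Fintype ι] [CommRing R]

/-- Up to a constant factor, the density of `K_{s+2}` minus an edge in the complete multipartite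
graph with part proportions `β`. -/
def cliqueMinusEdgePoly [DecidableEq ι] (s : ℕ) (β : ι → R) : R :=
  ∑ i, β i ^ 2 * (univ.erase i).esymm β s

theorem cliqueMinusEdgePoly_eq [DecidableEq ι] (s : ℕ) (β : ι → R) :
    cliqueMinusEdgePoly s β
      = univ.esymm β 1 * univ.esymm β (s + 1) - (s + 2) * univ.esymm β (s + 2) := by
  have hsplit : univ.esymm β 1 * univ.esymm β (s + 1)
      = ∑ i, β i * (univ.erase i).esymm β (s + 1) + cliqueMinusEdgePoly s β := by
    rw [esymm_one, sum_mul, cliqueMinusEdgePoly, ← sum_add_distrib]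
    refine sum_congr rfl fun i _ => ?_
    rw [esymm_succ_of_mem (mem_univ i)]
    ring
  rw [hsplit, sum_mul_esymm_erase]
  push_cast
  ring

theorem cliqueMinusEdgePoly_of_eq_zero_or_eq [DecidableEq ι] [DecidableEq R] {s : ℕ}
    {β : ι → R} {v : R} (h : ∀ j, β j = 0 ∨ β j = v) :
    cliqueMinusEdgePoly s β
      = #{j | β j ≠ 0} * v ^ 2 * ((#{j | β j ≠ 0} - 1).choose s * v ^ s) := by
  have hterm : ∀ i ∈ univ.filter (β · ≠ 0), β i ^ 2 * (univ.erase i).esymm β s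
      = v ^ 2 * ((#{j | β j ≠ 0} - 1).choose s * v ^ s) := fun i hi => by
    rw [esymm_eq_choose_mul_pow fun j _ => h j, filter_erase, card_erase_of_mem hi,
      (h i).resolve_left (mem_filter.1 hi).2]
  rw [cliqueMinusEdgePoly, ← sum_filter_of_ne (p := (β · ≠ 0)) fun j _ hj h0 => by
    simp [h0] at hj, sum_congr rfl hterm, sum_const, nsmul_eq_mul, mul_assoc]

theorem sum_filter_lt_mul_eq_esymm_two [DecidableEq ι] [LinearOrder ι] (β : ι → R) :
    ∑ p ∈ univ.filter (fun p : ι × ι => p.1 < p.2), β p.1 * β p.2 = univ.esymm β 2 := by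
  refine sum_bij (fun p _ => ({p.1, p.2} : Finset ι)) ?_ ?_ ?_ ?_
  · rintro ⟨a, b⟩ h
    simp only [mem_filter, mem_univ, true_and] at h
    simp [mem_powersetCard, card_pair h.ne]
  · rintro ⟨a, b⟩ hab ⟨c, d⟩ hcd h
    simp only [mem_filter, mem_univ, true_and, Finset.ext_iff, mem_insert, mem_singleton]
      at hab hcd h
    have := h a; have := h b; have := h c; have := h d
    grind
  · intro W hW
    obtain ⟨a, b, hab, rfl⟩ := card_eq_two.1 (mem_powersetCard.1 hW).2
    rcases hab.lt_or_gt with h | h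
    · exact ⟨(a, b), by simpa using h, rfl⟩
    · exact ⟨(b, a), by simpa using h, pair_comm b a⟩
  · rintro ⟨a, b⟩ h
    simp only [mem_filter, mem_univ, true_and] at h
    rw [prod_pair h.ne]

variable [DecidableEq ι] {β : ι → R} {i j : ι} {x y : R}

theorem esymm_erase_erase_update_update (n : ℕ) :
    ((univ.erase i).erase j).esymm (Function.update (Function.update β i x) j y) n
      = ((univ.erase i).erase j).esymm β n := by
  refine esymm_congr fun k hk => ?_
  rw [Function.update_of_ne (ne_of_mem_erase hk),
    Function.update_of_ne (ne_of_mem_erase (mem_of_mem_erase hk))]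

theorem esymm_one_update_update (hij : i ≠ j) (hxy : x + y = β i + β j) :
    univ.esymm (Function.update (Function.update β i x) j y) 1 = univ.esymm β 1 := by
  have hj : j ∈ univ.erase i := mem_erase.2 ⟨hij.symm, mem_univ j⟩
  have expand : ∀ γ : ι → R,
      univ.esymm γ 1 = ((univ.erase i).erase j).esymm γ 1 + γ j + γ i := fun γ => by
    rw [esymm_succ_of_mem (mem_univ i), esymm_succ_of_mem hj]
    simp
  rw [expand, expand β, esymm_erase_erase_update_update, Function.update_self,
    Function.update_of_ne hij, Function.update_self]
  linear_combination hxy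

theorem pairAffine_esymm (k : ℕ) : PairAffine fun β : ι → R => univ.esymm β k := by
  intro β i j hij
  match k with
  | 0 => exact ⟨1, 0, fun x y _ => by simp⟩
  | 1 => exact ⟨univ.esymm β 1, 0, fun x y hxy => by simp [esymm_one_update_update hij hxy]⟩
  | k + 2 =>
    set R' := (univ.erase i).erase j
    refine ⟨R'.esymm β (k + 2) + (β i + β j) * R'.esymm β (k + 1), R'.esymm β k,
      fun x y hxy => ?_⟩
    dsimp only
    rw [esymm_add_two_of_mem (mem_univ i) (mem_univ j) hij, esymm_erase_erase_update_update,
      esymm_erase_erase_update_update, esymm_erase_erase_update_update, Function.update_self,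
      Function.update_of_ne hij, Function.update_self]
    linear_combination R'.esymm β (k + 1) * hxy

theorem pairAffine_cliqueMinusEdgePoly (s : ℕ) :
    PairAffine (cliqueMinusEdgePoly (R := R) (ι := ι) s) := by
  intro β i j hij
  obtain ⟨K, σ, hKσ⟩ := pairAffine_esymm (s + 1) β i j hij
  obtain ⟨L, τ, hLτ⟩ := pairAffine_esymm (s + 2) β i j hij
  refine ⟨univ.esymm β 1 * K - (s + 2) * L, univ.esymm β 1 * σ - (s + 2) * τ,
    fun x y hxy => ?_⟩
  dsimp only at hKσ hLτ
  rw [cliqueMinusEdgePoly_eq, esymm_one_update_update hij hxy, hKσ x y hxy, hLτ x y hxy]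
  ring

end

section

variable {ι : Type*} [Fintype ι] {β : ι → ℝ}

theorem eq_zero_or_eq_inv_card_of_mem_stdSimplex (hβ : β ∈ stdSimplex ℝ ι)
    (hβ_eq : ∀ i j, β i ≠ 0 → β j ≠ 0 → β i = β j) (k : ι) :
    β k = 0 ∨ β k = (#{j | β j ≠ 0} : ℝ)⁻¹ := by
  refine or_iff_not_imp_left.2 fun hk => eq_inv_of_mul_eq_one_right ?_
  rw [← hβ.2, ← sum_filter_ne_zero, ← nsmul_eq_mul, ← sum_const]
  exact sum_congr rfl fun j hj => (hβ_eq j k (mem_filter.1 hj).2 hk).symm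

variable [DecidableEq ι] {i j : ι} {x y : ℝ}

theorem update_update_mem_stdSimplex (hβ : β ∈ stdSimplex ℝ ι) (hij : i ≠ j) (hx : 0 ≤ x)
    (hy : 0 ≤ y) (hxy : x + y = β i + β j) :
    Function.update (Function.update β i x) j y ∈ stdSimplex ℝ ι := by
  refine ⟨fun k => ?_, ?_⟩
  · simp only [Function.update_apply]
    split_ifs
    exacts [hy, hx, hβ.1 k]
  · rw [← esymm_one, esymm_one_update_update hij hxy, esymm_one]
    exact hβ.2

theorem card_support_update_update_lt (hij : i ≠ j) (hi : β i ≠ 0) (hj : β j ≠ 0) (y : ℝ) :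
    #{k | Function.update (Function.update β i 0) j y k ≠ 0} < #{k | β k ≠ 0} := by
  refine card_lt_card ((ssubset_iff_of_subset fun k hk => ?_).2 ⟨i, ?_, ?_⟩)
  · simp only [mem_filter, mem_univ, true_and, Function.update_apply] at hk ⊢
    split_ifs at hk with hkj hki
    exacts [hkj ▸ hj, absurd rfl hk, hk]
  · simpa using hi
  · simp [Function.update_of_ne hij]

theorem PairAffine.exists_isMaxOn_stdSimplex {F : (ι → ℝ) → ℝ} (hF : PairAffine F)
    (hc : Continuous F) (hne : (stdSimplex ℝ ι).Nonempty) :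
    ∃ β ∈ stdSimplex ℝ ι, IsMaxOn F (stdSimplex ℝ ι) β ∧
      ∀ i j, β i ≠ 0 → β j ≠ 0 → β i = β j := by
  obtain ⟨β₀, hβ₀, hmax₀⟩ := (isCompact_stdSimplex ℝ ι).exists_isMaxOn hne hc.continuousOn
  obtain ⟨β, ⟨hβ, hmax⟩, hmin⟩ := (measure fun β : ι → ℝ => #{k | β k ≠ 0}).wf.has_min
    {β | β ∈ stdSimplex ℝ ι ∧ IsMaxOn F (stdSimplex ℝ ι) β} ⟨β₀, hβ₀, hmax₀⟩
  refine ⟨β, hβ, hmax, fun i j hi hj => ?_⟩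
  obtain rfl | hij := eq_or_ne i j
  · rfl
  have hi' : 0 < β i := (hβ.1 i).lt_of_ne' hi
  have hj' : 0 < β j := (hβ.1 j).lt_of_ne' hj
  obtain ⟨K, σ, hKσ⟩ := hF β i j hij
  have hβK : F β = K + σ * (β i * β j) := by simpa using hKσ (β i) (β j) rfl
  have hσ : 0 < σ := by
    by_contra! hσ
    refine hmin _ ⟨update_update_mem_stdSimplex hβ hij le_rfl (by positivity) (zero_add _),
      fun z hz => ?_⟩ (card_support_update_update_lt hij hi hj _)
    calc F z ≤ F β := hmax hz
      _ ≤ K := by nlinarith [mul_pos hi' hj']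
      _ = _ := by rw [hKσ 0 _ (zero_add _)]; ring
  have hmid : F _ ≤ F β := hmax (update_update_mem_stdSimplex hβ hij
    (x := (β i + β j) / 2) (y := (β i + β j) / 2) (by positivity) (by positivity) (by ring))
  rw [hKσ _ _ (by ring), hβK] at hmid
  have hsq : (β i - β j) ^ 2 ≤ 0 :=
    nonpos_of_mul_nonpos_right (by linear_combination 4 * hmid) hσ
  exact sub_eq_zero.1 (pow_eq_zero_iff two_ne_zero |>.1 (hsq.antisymm (sq_nonneg _)))

end

theorem stmt5_general (s : ℕ) (lam mu : ℝ)
    (h : ∀ r : ℕ, 0 < r →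
      (1 / (r : ℝ) ^ (s + 1)) * ((r - 1).choose s : ℝ) ≤ lam * ((r : ℝ) - 1) / (2 * r) + mu)
    (m : ℕ) (α : Fin m → ℝ) (hα0 : ∀ i, 0 ≤ α i) (hα1 : ∑ i, α i = 1) :
    ∑ i : Fin m, (α i) ^ 2 *
        ∑ W ∈ (Finset.univ.erase i).powersetCard s, ∏ j ∈ W, α j ≤
      lam * ∑ p ∈ Finset.univ.filter (fun p : Fin m × Fin m => p.1 < p.2), α p.1 * α p.2
        + mu := by
  set F : (Fin m → ℝ) → ℝ := fun β => cliqueMinusEdgePoly s β - lam * univ.esymm β 2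
  have hF : PairAffine F :=
    (pairAffine_cliqueMinusEdgePoly s).sub ((pairAffine_esymm 2).const_mul lam)
  have hc : Continuous F := by unfold F cliqueMinusEdgePoly esymm; fun_prop
  obtain ⟨β, hβ, hmax, hβ_eq⟩ := hF.exists_isMaxOn_stdSimplex hc ⟨α, hα0, hα1⟩
  have hβr := eq_zero_or_eq_inv_card_of_mem_stdSimplex hβ hβ_eq
  obtain ⟨r, hr_def⟩ : ∃ r, #{j | β j ≠ 0} = r := ⟨_, rfl⟩
  rw [hr_def] at hβr
  have hr : 0 < r := by
    obtain ⟨j, -, hj⟩ := exists_ne_zero_of_sum_ne_zero (hβ.2 ▸ one_ne_zero)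
    exact hr_def ▸ card_pos.2 ⟨j, by simpa using hj⟩
  have hFβ : F β = 1 / (r : ℝ) ^ (s + 1) * ((r - 1).choose s : ℝ)
      - lam * ((r : ℝ) - 1) / (2 * r) := by
    simp only [F, cliqueMinusEdgePoly_of_eq_zero_or_eq hβr, hr_def, inv_pow, Nat.cast_choose_two,
      esymm_eq_choose_mul_pow fun j _ => hβr j]
    field_simp
    ring
  have hFα : F α ≤ F β := hmax ⟨hα0, hα1⟩
  change cliqueMinusEdgePoly s α ≤ _
  rw [sum_filter_lt_mul_eq_esymm_two]
  linarith [h r hr]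

/-- If `(1/r^{s+1})·C(r−1,s) ≤ λ(r−1)/(2r) + μ` for every positive integer `r`, then for
every point `(α_1,…,α_m)` of the standard simplex,
`∑_i ∑_{W ⊆ [m]∖{i}, |W| = s} α_i² ∏_{j∈W} α_j ≤ λ ∑_{i<j} α_i α_j + μ`. -/
theorem stmt5 (s : ℕ) (hs : 1 ≤ s) (lam mu : ℝ)
    (h : ∀ r : ℕ, 0 < r →
      (1 / (r : ℝ) ^ (s + 1)) * ((r - 1).choose s : ℝ) ≤ lam * ((r : ℝ) - 1) / (2 * r) + mu)
    (m : ℕ) (hm : 1 ≤ m) (α : Fin m → ℝ) (hα0 : ∀ i, 0 ≤ α i) (hα1 : ∑ i, α i = 1) :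
    ∑ i : Fin m, (α i) ^ 2 *
        ∑ W ∈ (Finset.univ.erase i).powersetCard s, ∏ j ∈ W, α j ≤
      lam * ∑ p ∈ Finset.univ.filter (fun p : Fin m × Fin m => p.1 < p.2), α p.1 * α p.2
        + mu :=
  stmt5_general s lam mu h m α hα0 hα1
end

section
/- For every integer t ≥ 4, the function F(x) = x·∏_{i=1}^{t−2}(1−ix) is concave on the interval [0, 2/(t(t−2))]. -/
/-! For `P x = ∏ (1 - aᵢ x)` and `T x = ∑ aᵢ / (1 - aᵢ x) = -P' x / P x` one finds
`(x P)'' = P (x T² - 2 T - x T')` with `T' = ∑ aᵢ² / (1 - aᵢ x)² ≥ 0`, so `x P` is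
concave wherever `P > 0` and `x T ≤ 2`. As `u ↦ u / (1 - u)` is increasing on `[0, 1)`,
`x T(x)` is largest at the right end `b` of the interval; for `aᵢ = i ≤ n` and
`b = 2 / (n (n + 2))` each of the `n` terms `i b / (1 - i b)` is at most
`n b / (1 - n b) = 2 / n`. -/

open Finset

section ProductOfLinearFactors

theorem hasDerivAt_one_sub_mul (c x : ℝ) : HasDerivAt (fun y => 1 - c * y) (-c) x := by
  simpa using ((hasDerivAt_id x).const_mul c).const_sub 1

variable {ι : Type*} (s : Finset ι) (a : ι → ℝ)

theorem hasDerivAt_prod_one_sub_mul {x : ℝ} (hx : ∀ i ∈ s, 1 - a i * x ≠ 0) :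
    HasDerivAt (fun y => ∏ i ∈ s, (1 - a i * y))
      (-(∏ i ∈ s, (1 - a i * x)) * ∑ i ∈ s, a i / (1 - a i * x)) x := by
  classical
  refine (HasDerivAt.fun_finsetProd fun i _ => hasDerivAt_one_sub_mul (a i) x).congr_deriv ?_
  rw [neg_mul, mul_sum, ← sum_neg_distrib]
  refine sum_congr rfl fun i hi => ?_
  rw [← prod_erase_mul s _ hi, smul_eq_mul, mul_assoc, mul_div_cancel₀ _ (hx i hi)]
  ring

theorem hasDerivAt_sum_div_one_sub_mul {x : ℝ} (hx : ∀ i ∈ s, 1 - a i * x ≠ 0) :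
    HasDerivAt (fun y => ∑ i ∈ s, a i / (1 - a i * y))
      (∑ i ∈ s, a i ^ 2 / (1 - a i * x) ^ 2) x := by
  refine HasDerivAt.fun_sum fun i hi => ?_
  exact ((hasDerivAt_const x (a i)).div (hasDerivAt_one_sub_mul (a i) x) (hx i hi)).congr_deriv
    (by ring)

theorem concaveOn_mul_prod_one_sub_mul {b : ℝ} (ha : ∀ i ∈ s, 0 ≤ a i)
    (hab : ∀ i ∈ s, a i * b < 1) (hsum : ∑ i ∈ s, a i * b / (1 - a i * b) ≤ 2) :
    ConcaveOn ℝ (Set.Icc 0 b) (fun x => x * ∏ i ∈ s, (1 - a i * x)) := by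
  set P := fun x : ℝ => ∏ i ∈ s, (1 - a i * x)
  set T := fun x : ℝ => ∑ i ∈ s, a i / (1 - a i * x)
  set S := fun x : ℝ => ∑ i ∈ s, a i ^ 2 / (1 - a i * x) ^ 2
  have hfactor_pos {x : ℝ} (hx : x ∈ Set.Ioo 0 b) (i : ι) (hi : i ∈ s) :
      0 < 1 - a i * x := by
    nlinarith [hab i hi, mul_le_mul_of_nonneg_left hx.2.le (ha i hi)]
  have hfactor_ne {x : ℝ} (hx : x ∈ Set.Ioo 0 b) (i : ι) (hi : i ∈ s) : 1 - a i * x ≠ 0 :=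
    (hfactor_pos hx i hi).ne'
  refine concaveOn_of_hasDerivWithinAt2_nonpos (convex_Icc 0 b)
    (f' := fun x => P x * (1 - x * T x)) (f'' := fun x => P x * (x * T x ^ 2 - 2 * T x - x * S x))
    (by fun_prop) ?_ ?_ ?_ <;> rw [interior_Icc] <;> intro x hx
  · have hP : HasDerivAt P (-P x * T x) x := hasDerivAt_prod_one_sub_mul s a (hfactor_ne hx)
    exact ((hasDerivAt_id' x).fun_mul hP |>.congr_deriv (by ring)).hasDerivWithinAt
  · have hP : HasDerivAt P (-P x * T x) x := hasDerivAt_prod_one_sub_mul s a (hfactor_ne hx)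
    have hT : HasDerivAt T (S x) x := hasDerivAt_sum_div_one_sub_mul s a (hfactor_ne hx)
    exact (hP.fun_mul (((hasDerivAt_id' x).fun_mul hT).const_sub 1) |>.congr_deriv
      (by ring)).hasDerivWithinAt
  · have hP : 0 ≤ P x := (prod_pos (hfactor_pos hx)).le
    have hT : 0 ≤ T x := sum_nonneg fun i hi => div_nonneg (ha i hi) (hfactor_pos hx i hi).le
    have hS : 0 ≤ S x := sum_nonneg fun i _ => by positivity
    have hxT : x * T x ≤ 2 := by
      refine le_trans ?_ hsum
      rw [mul_sum]
      refine sum_le_sum fun i hi => ?_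
      have hxb : a i * x ≤ a i * b := mul_le_mul_of_nonneg_left hx.2.le (ha i hi)
      rw [mul_div_assoc', mul_comm x]
      exact div_le_div₀ ((mul_nonneg (ha i hi) hx.1.le).trans hxb) hxb
        (by linarith [hab i hi]) (by linarith)
    have hquad : x * T x ^ 2 - 2 * T x - x * S x ≤ 0 := by
      nlinarith [mul_nonneg hT (sub_nonneg.2 hxT), mul_nonneg hx.1.le hS]
    exact mul_nonpos_of_nonneg_of_nonpos hP hquad

end ProductOfLinearFactors

theorem concaveOn_mul_prod_Icc_one_sub_natCast_mul {n : ℕ} (hn : 1 ≤ n) :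
    ConcaveOn ℝ (Set.Icc (0 : ℝ) (2 / ((n + 2) * n)))
      (fun x : ℝ => x * ∏ i ∈ Icc 1 n, (1 - (i : ℝ) * x)) := by
  have hn1 : (1 : ℝ) ≤ n := by exact_mod_cast hn
  have hn0 : (n : ℝ) ≠ 0 := by positivity
  set b : ℝ := 2 / ((n + 2) * n) with hb
  have hnb : n * b = 2 / (n + 2) := by rw [hb]; field_simp
  have hnb_lt : n * b < 1 := by rw [hnb, div_lt_one (by positivity)]; linarith
  have hib (i : ℕ) (hi : i ∈ Icc 1 n) : (i : ℝ) * b ≤ n * b := by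
    gcongr
    exact_mod_cast (mem_Icc.1 hi).2
  refine concaveOn_mul_prod_one_sub_mul _ _ (fun i _ => i.cast_nonneg)
    (fun i hi => (hib i hi).trans_lt hnb_lt) ?_
  calc ∑ i ∈ Icc 1 n, (i : ℝ) * b / (1 - i * b)
      ≤ ∑ _i ∈ Icc 1 n, n * b / (1 - n * b) :=
        sum_le_sum fun i hi => div_le_div₀ (by positivity) (hib i hi) (by linarith)
          (by linarith [hib i hi])
    _ = 2 := by
      rw [sum_const, Nat.card_Icc, nsmul_eq_mul, Nat.add_sub_cancel, hnb]
      field_simp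
      rw [add_sub_cancel_right, div_self hn0]

/-- For `t ≥ 4`, the function `F(x) = x·∏_{i=1}^{t−2}(1−ix)` is concave on
`[0, 2/(t(t−2))]`. -/
theorem stmt6 (t : ℕ) (ht : 4 ≤ t) :
    ConcaveOn ℝ (Set.Icc 0 (2 / ((t : ℝ) * ((t : ℝ) - 2))))
      (fun x : ℝ => x * ∏ i ∈ Finset.Icc 1 (t - 2), (1 - (i : ℝ) * x)) := by
  obtain ⟨n, rfl⟩ := Nat.exists_eq_add_of_le' (show 2 ≤ t by omega)
  have hcast : ((n + 2 : ℕ) : ℝ) - 2 = n := by push_cast; ring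
  rw [hcast, Nat.add_sub_cancel, Nat.cast_add, Nat.cast_two]
  exact concaveOn_mul_prod_Icc_one_sub_natCast_mul (by omega)
end

section
/- Let t ≥ 4 and define A_r = C(t,2)·(r−2)(r−3)···(r−(t−2))/r^{t−2} for integers r ≥ 2 (so A_r = C(t,2)·(r−2)_{t−3}/r^{t−2} with falling factorial). If t−1 ≤ r ≤ (3t²−5t−4)/6, then A_{r−1} < A_r. -/
/-!
Since `(r - 1) - i = r - (i + 1)`, the products defining `A_{r-1}` and `A_r` share the factor
`(r-3)⋯(r-t+2)`, and `A_{r-1} < A_r` reduces to `(r-t+1) r^{t-2} < (r-2) (r-1)^{t-2}`.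
Writing `(r-1)^{t-2} = r^{t-2} (1 - 1/r)^{t-2}` and bounding `(1 - 1/r)^{t-2}` below by its
Taylor polynomial of degree three turns this into a cubic inequality in `r`, which holds
on the whole window `t - 1 ≤ r ≤ (3t² - 5t - 4)/6`.
-/

/-- `A_r = C(t,2)·(r−2)(r−3)⋯(r−(t−2))/r^{t−2}`. -/
noncomputable def Afun (t r : ℕ) : ℝ :=
  (t.choose 2 : ℝ) * (∏ i ∈ Finset.Icc 2 (t - 2), ((r : ℝ) - (i : ℝ))) / (r : ℝ) ^ (t - 2)

open Finset

theorem taylor_three_le_one_sub_pow (n : ℕ) {x : ℝ} (hx0 : 0 ≤ x) (hx1 : x ≤ 1) :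
    1 - n * x + n * (n - 1) / 2 * x ^ 2 - n * (n - 1) * (n - 2) / 6 * x ^ 3 ≤ (1 - x) ^ n := by
  induction n with
  | zero => norm_num
  | succ m ih =>
    have hm : (0 : ℝ) ≤ m * (m - 1) * (m - 2) := by
      rcases Nat.lt_or_ge m 2 with h | h
      · interval_cases m <;> norm_num
      · have h2 : (2 : ℝ) ≤ m := by exact_mod_cast h
        exact mul_nonneg (mul_nonneg (by linarith) (by linarith)) (by linarith)
    have hstep := mul_le_mul_of_nonneg_left ih (sub_nonneg.mpr hx1)
    push_cast
    rw [pow_succ' (1 - x) m]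
    nlinarith [mul_nonneg hm (pow_nonneg hx0 4)]

theorem cubic_window_ineq {t r : ℝ} (ht : 4 ≤ t) (hr1 : t - 1 ≤ r)
    (hr2 : 6 * r ≤ 3 * t ^ 2 - 5 * t - 4) :
    (r - (t - 1)) * r ^ 3 <
      (r - 2) * (r ^ 3 - (t - 2) * r ^ 2 + (t - 2) * (t - 3) / 2 * r
        - (t - 2) * (t - 3) * (t - 4) / 6) := by
  have hs : 0 ≤ r - (t - 1) := by linarith
  have hu : 0 ≤ (3 * t ^ 2 - 5 * t - 4) / 6 - r := by linarith
  have ht4 : 0 ≤ t - 4 := by linarith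
  nlinarith [mul_nonneg hs hu, mul_nonneg (mul_nonneg hs hs) hu, mul_nonneg hs (mul_nonneg hu hu),
    mul_nonneg ht4 (mul_nonneg hs hu)]

theorem sub_mul_pow_lt_sub_mul_sub_one_pow {t : ℕ} {r : ℝ} (ht : 4 ≤ t) (hr1 : (t : ℝ) - 1 ≤ r)
    (hr2 : 6 * r ≤ 3 * (t : ℝ) ^ 2 - 5 * t - 4) :
    (r - (t - 1)) * r ^ (t - 2) < (r - 2) * (r - 1) ^ (t - 2) := by
  have ht' : (4 : ℝ) ≤ t := by exact_mod_cast ht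
  have hr : 0 < r := by linarith
  set P : ℝ := 1 - ((t : ℝ) - 2) * r⁻¹ + ((t : ℝ) - 2) * ((t : ℝ) - 2 - 1) / 2 * r⁻¹ ^ 2
    - ((t : ℝ) - 2) * ((t : ℝ) - 2 - 1) * ((t : ℝ) - 2 - 2) / 6 * r⁻¹ ^ 3 with hP
  have hP_le : P ≤ (1 - r⁻¹) ^ (t - 2) := by
    have h := taylor_three_le_one_sub_pow (t - 2) (inv_nonneg.mpr hr.le)
      (inv_le_one_of_one_le₀ (by linarith))
    rwa [Nat.cast_sub (by omega), Nat.cast_ofNat] at h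
  have hlt : r - (t - 1) < (r - 2) * P := by
    have h := cubic_window_ineq ht' hr1 hr2
    have hP3 : r ^ 3 * P = r ^ 3 - (t - 2) * r ^ 2 + (t - 2) * (t - 3) / 2 * r
        - (t - 2) * (t - 3) * (t - 4) / 6 := by
      rw [hP]; field_simp; ring
    rw [← hP3] at h
    nlinarith [pow_pos hr 3]
  have hsub : (r - 1) ^ (t - 2) = r ^ (t - 2) * (1 - r⁻¹) ^ (t - 2) := by
    rw [← mul_pow, mul_sub, mul_one, mul_inv_cancel₀ hr.ne']
  have hrpow : 0 < r ^ (t - 2) := pow_pos hr _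
  calc (r - (t - 1)) * r ^ (t - 2) < (r - 2) * P * r ^ (t - 2) :=
        mul_lt_mul_of_pos_right hlt hrpow
    _ ≤ (r - 2) * (1 - r⁻¹) ^ (t - 2) * r ^ (t - 2) := by
        gcongr
        linarith
    _ = (r - 2) * (r - 1) ^ (t - 2) := by rw [hsub]; ring

theorem prod_Icc_sub_eq_sub_mul {R : Type*} [CommRing R] (x : R) {a b : ℕ} (hab : a ≤ b) :
    ∏ i ∈ Icc a b, (x - i) = (x - a) * ∏ i ∈ Icc (a + 1) b, (x - i) := by
  rw [Icc_eq_cons_Ioc hab, prod_cons, Icc_add_one_left_eq_Ioc]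

theorem prod_Icc_sub_one_sub {R : Type*} [CommRing R] (x : R) (a b : ℕ) :
    ∏ i ∈ Icc a b, (x - 1 - i) = ∏ i ∈ Icc (a + 1) (b + 1), (x - i) := by
  rw [← map_add_right_Icc, prod_map]
  simp only [addRightEmbedding_apply, Nat.cast_add, Nat.cast_one]
  exact prod_congr rfl fun i _ => by ring

theorem Afun_pred_lt_Afun_of_mul_pow_lt {t r : ℕ} (ht : 4 ≤ t) (hr : t - 1 ≤ r)
    (h : ((r : ℝ) - (t - 1)) * (r : ℝ) ^ (t - 2) < ((r : ℝ) - 2) * ((r : ℝ) - 1) ^ (t - 2)) :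
    Afun t (r - 1) < Afun t r := by
  set Q := ∏ i ∈ Icc 3 (t - 2), ((r : ℝ) - i)
  have hQ : 0 < Q := prod_pos fun i hi => by
    have : (i : ℝ) + 1 ≤ r := by exact_mod_cast (by grind : i + 1 ≤ r)
    linarith
  have hA : ∏ i ∈ Icc 2 (t - 2), ((r : ℝ) - i) = ((r : ℝ) - 2) * Q :=
    prod_Icc_sub_eq_sub_mul _ (by omega)
  have hA' : ∏ i ∈ Icc 2 (t - 2), (((r - 1 : ℕ) : ℝ) - i) = Q * ((r : ℝ) - (t - 1)) := by
    rw [Nat.cast_sub (by omega), Nat.cast_one, prod_Icc_sub_one_sub,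
      show t - 2 + 1 = t - 3 + 1 + 1 by omega, prod_Icc_succ_top (by omega),
      show t - 3 + 1 = t - 2 by omega, show t - 2 + 1 = t - 1 by omega,
      Nat.cast_sub (by omega : 1 ≤ t), Nat.cast_one]
  have hr1 : (0 : ℝ) < r - 1 := by
    have : (4 : ℝ) ≤ r + 1 := by exact_mod_cast (by omega : 4 ≤ r + 1)
    linarith
  have hC : (0 : ℝ) < t.choose 2 := by exact_mod_cast Nat.choose_pos (by omega)
  unfold Afun
  rw [hA, hA', Nat.cast_sub (by omega), Nat.cast_one,
    div_lt_div_iff₀ (pow_pos hr1 _) (pow_pos (by linarith) _)]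
  linear_combination (t.choose 2 : ℝ) * Q * h

/-- For `t ≥ 4` and `t−1 ≤ r ≤ (3t²−5t−4)/6`, we have `A_{r−1} < A_r`. -/
theorem stmt7 (t r : ℕ) (ht : 4 ≤ t) (hr1 : t - 1 ≤ r) (hr2 : 6 * r ≤ 3 * t ^ 2 - 5 * t - 4) :
    Afun t (r - 1) < Afun t r := by
  refine Afun_pred_lt_Afun_of_mul_pow_lt ht hr1 (sub_mul_pow_lt_sub_mul_sub_one_pow ht ?_ ?_)
  · have : ((t - 1 : ℕ) : ℝ) ≤ r := by exact_mod_cast hr1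
    rwa [Nat.cast_sub (by omega), Nat.cast_one] at this
  · have h54 : 5 * t + 4 ≤ 3 * t ^ 2 := by nlinarith
    have : ((6 * r : ℕ) : ℝ) ≤ ((3 * t ^ 2 - 5 * t - 4 : ℕ) : ℝ) := by exact_mod_cast hr2
    rw [Nat.sub_sub, Nat.cast_sub h54] at this
    push_cast at this
    linarith
end

section
/- Let t ≥ 4 and A_r = C(t,2)·(r−2)_{t−3}/r^{t−2}. If r ≥ (3t²−5t)/6, then A_{r−1} > A_r. -/
open Finset

lemma one_sub_mul_sum_range_choose_succ {R : Type*} [CommRing R] (x : R) (m k : ℕ) :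
    (1 - x) * ∑ i ∈ range (k + 1), (-1) ^ i * (m.choose i : R) * x ^ i =
      ∑ i ∈ range (k + 1), (-1) ^ i * ((m + 1).choose i : R) * x ^ i
        + (-1) ^ (k + 1) * m.choose k * x ^ (k + 1) := by
  induction k with
  | zero =>
    simp only [zero_add, range_one, sum_singleton, pow_zero, Nat.choose_zero_right, Nat.cast_one,
      mul_one, pow_one, neg_mul, one_mul]
    ring
  | succ k ih =>
    rw [sum_range_succ, mul_add, ih, sum_range_succ _ (k + 1), Nat.choose_succ_succ, Nat.cast_add]
    ring

lemma one_sub_pow_le_sum_range_choose {R : Type*} [CommRing R] [LinearOrder R]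
    [IsStrictOrderedRing R] {k : ℕ} (hk : Odd k) {x : R} (hx0 : 0 ≤ x) (hx1 : x ≤ 1)
    (n : ℕ) : (1 - x) ^ n ≤ ∑ i ∈ range k, (-1) ^ i * (n.choose i : R) * x ^ i := by
  obtain ⟨j, rfl⟩ := hk
  induction n with
  | zero => simp [sum_range_succ']
  | succ m ih =>
    have hrem : 0 ≤ m.choose (2 * j) * x ^ (2 * j + 1) := by positivity
    calc (1 - x) ^ (m + 1) = (1 - x) * (1 - x) ^ m := pow_succ' _ _
      _ ≤ (1 - x) * ∑ i ∈ range (2 * j + 1), (-1) ^ i * (m.choose i : R) * x ^ i :=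
        mul_le_mul_of_nonneg_left ih (sub_nonneg.2 hx1)
      _ ≤ _ := by
        rw [one_sub_mul_sum_range_choose_succ, pow_succ, pow_mul]
        simp only [neg_one_sq, one_pow, one_mul, neg_mul, mul_assoc]
        linarith

lemma Nat.cast_choose_three {K : Type*} [Field K] [CharZero K] (n : ℕ) :
    (n.choose 3 : K) = n * (n - 1) * (n - 2) / 6 := by
  rw [Nat.cast_choose_eq_descPochhammer_div]
  simp [descPochhammer_succ_eval, Nat.factorial]

lemma Nat.cast_choose_four {K : Type*} [Field K] [CharZero K] (n : ℕ) :
    (n.choose 4 : K) = n * (n - 1) * (n - 2) * (n - 3) / 24 := by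
  rw [Nat.cast_choose_eq_descPochhammer_div]
  simp [descPochhammer_succ_eval, Nat.factorial]

lemma cubic_le_cubic_of_le {a b c x x₀ : ℝ} (hb : 0 ≤ b) (hc : 0 ≤ c) (hxx₀ : x ≤ x₀)
    (ha : 2 * b * x₀ ≤ a) :
    1 - a * x₀ + b * x₀ ^ 2 - c * x₀ ^ 3 ≤ 1 - a * x + b * x ^ 2 - c * x ^ 3 := by
  have hfactor : (1 - a * x + b * x ^ 2 - c * x ^ 3) - (1 - a * x₀ + b * x₀ ^ 2 - c * x₀ ^ 3) =
      (x₀ - x) * ((a - 2 * b * x₀) + b * (x₀ - x) + c * (x ^ 2 + x * x₀ + x₀ ^ 2)) := by ring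
  have hsq : 0 ≤ x ^ 2 + x * x₀ + x₀ ^ 2 := by nlinarith [sq_nonneg (x + x₀)]
  have : 0 ≤ (x₀ - x) * ((a - 2 * b * x₀) + b * (x₀ - x) + c * (x ^ 2 + x * x₀ + x₀ ^ 2)) := by
    have := sub_nonneg.2 hxx₀
    have := sub_nonneg.2 ha
    positivity
  linarith

lemma cubic_pos_of_mul_le_six {n x : ℝ} (hn : 2 ≤ n) (hD : (3 * n ^ 2 + 7 * n + 2) * x ≤ 6) :
    0 < 1 - n * (n + 3) / 2 * x + n * (n - 1) * (n + 4) / 6 * x ^ 2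
      - n * (n - 1) * (n - 2) * (n + 5) / 24 * x ^ 3 := by
  set D := 3 * n ^ 2 + 7 * n + 2
  have hD0 : 0 < D := by positivity
  have hn2 := sub_nonneg.2 hn
  have hn1 : 0 ≤ n - 1 := by linarith
  set x₀ := 6 / D
  have hend : 0 < 1 - n * (n + 3) / 2 * x₀ + n * (n - 1) * (n + 4) / 6 * x₀ ^ 2
      - n * (n - 1) * (n - 2) * (n + 5) / 24 * x₀ ^ 3 := by
    -- the numerator is `21n⁴ + 10n³ + 51n² - 90n + 8`, expanded around `n = 2`
    have hvalue : 1 - n * (n + 3) / 2 * x₀ + n * (n - 1) * (n + 4) / 6 * x₀ ^ 2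
        - n * (n - 1) * (n - 2) * (n + 5) / 24 * x₀ ^ 3 =
        (21 * (n - 2) ^ 4 + 178 * (n - 2) ^ 3 + 615 * (n - 2) ^ 2 + 906 * (n - 2) + 448) / D ^ 3 := by
      simp only [x₀, D]
      field_simp
      ring
    rw [hvalue]
    positivity
  have ha : 2 * (n * (n - 1) * (n + 4) / 6) * x₀ ≤ n * (n + 3) / 2 := by
    have hdiff : n * (n + 3) / 2 - 2 * (n * (n - 1) * (n + 4) / 6) * x₀ =
        n * (3 * n ^ 3 + 12 * n ^ 2 + 11 * n + 22) / (2 * D) := by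
      simp only [x₀, D]
      field_simp
      ring
    rw [← sub_nonneg, hdiff]
    positivity
  refine hend.trans_le (cubic_le_cubic_of_le (by positivity) (by positivity) ?_ ha)
  rwa [le_div_iff₀ hD0, mul_comm]

lemma one_sub_two_mul_mul_one_sub_pow_lt {n : ℕ} (hn : 2 ≤ n) {x : ℝ} (hx : 0 < x)
    (hD : (3 * n ^ 2 + 7 * n + 2) * x ≤ 6) :
    (1 - 2 * x) * (1 - x) ^ n < 1 - (n + 1) * x := by
  have hn' : (2 : ℝ) ≤ n := by exact_mod_cast hn
  have hx2 : 2 * x ≤ 1 := by nlinarith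
  have hT : (1 - x) ^ n ≤
      1 - n * x + n.choose 2 * x ^ 2 - n.choose 3 * x ^ 3 + n.choose 4 * x ^ 4 := by
    have := one_sub_pow_le_sum_range_choose (k := 5) (by decide) hx.le (by linarith) n
    simp only [sum_range_succ, sum_range_zero] at this
    norm_num at this
    linarith
  have hC4 : 0 ≤ 2 * (n.choose 4 : ℝ) * x ^ 4 := by positivity
  calc (1 - 2 * x) * (1 - x) ^ n
      ≤ (1 - 2 * x) * (1 - n * x + n.choose 2 * x ^ 2 - n.choose 3 * x ^ 3 + n.choose 4 * x ^ 4) :=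
        mul_le_mul_of_nonneg_left hT (by linarith)
    _ = 1 - (n + 1) * x - x * ((1 - n * (n + 3) / 2 * x + n * (n - 1) * (n + 4) / 6 * x ^ 2
          - n * (n - 1) * (n - 2) * (n + 5) / 24 * x ^ 3) + 2 * (n.choose 4 : ℝ) * x ^ 4) := by
      rw [Nat.cast_choose_two, Nat.cast_choose_three, Nat.cast_choose_four]
      ring
    _ < 1 - (n + 1) * x :=
      sub_lt_self _ (mul_pos hx (add_pos_of_pos_of_nonneg
        (cubic_pos_of_mul_le_six hn' (by exact_mod_cast hD)) hC4))

lemma sub_two_mul_sub_one_pow_lt {n : ℕ} (hn : 2 ≤ n) {r : ℝ}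
    (hr : 3 * n ^ 2 + 7 * n + 2 ≤ 6 * r) :
    (r - 2) * (r - 1) ^ n < (r - n - 1) * r ^ n := by
  have hr0 : 0 < r := by nlinarith
  have hx : (3 * n ^ 2 + 7 * n + 2) * r⁻¹ ≤ 6 := by
    rw [← div_eq_mul_inv, div_le_iff₀ hr0]
    linarith
  have hlhs : (r - 2) * (r - 1) ^ n = r ^ (n + 1) * ((1 - 2 * r⁻¹) * (1 - r⁻¹) ^ n) := by
    field_simp
    rw [div_pow]
    field_simp
    ring
  have hrhs : (r - n - 1) * r ^ n = r ^ (n + 1) * (1 - (n + 1) * r⁻¹) := by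
    field_simp
    ring
  rw [hlhs, hrhs]
  exact mul_lt_mul_of_pos_left
    (one_sub_two_mul_mul_one_sub_pow_lt hn (inv_pos.2 hr0) hx) (by positivity)

lemma sub_mul_prod_Icc_sub_one_sub {α : Type*} [CommRing α] (x : α) {a b : ℕ} (hab : a ≤ b) :
    (x - a) * ∏ i ∈ Icc a b, (x - 1 - i) = (x - b - 1) * ∏ i ∈ Icc a b, (x - i) := by
  induction b, hab using Nat.le_induction with
  | base => simp only [Icc_self, prod_singleton]; ring
  | succ b hab ih =>
    rw [prod_Icc_succ_top (by omega), prod_Icc_succ_top (by omega), ← mul_assoc, ih]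
    push_cast
    ring

lemma Afun_lt_Afun_sub_one {n r : ℕ} (hn : 2 ≤ n) (hr : n + 1 < r)
    (h : ((r : ℝ) - 2) * (r - 1) ^ n < (r - n - 1) * r ^ n) :
    Afun (n + 2) r < Afun (n + 2) (r - 1) := by
  have hr2 : (2 : ℝ) < r := by exact_mod_cast (by omega : 2 < r)
  simp only [Afun, Nat.add_sub_cancel, Nat.cast_sub (by omega : 1 ≤ r), Nat.cast_one]
  set P := ∏ i ∈ Icc 2 n, ((r : ℝ) - i)
  set P' := ∏ i ∈ Icc 2 n, ((r : ℝ) - 1 - i)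
  set C : ℝ := ↑((n + 2).choose 2)
  have hP : 0 < P := prod_pos fun i hi => by
    have : (i : ℝ) < r := by exact_mod_cast (by grind : i < r)
    linarith
  have hC : 0 < C := Nat.cast_pos.2 (Nat.choose_pos (by omega))
  have htele : (r - 2) * P' = (r - n - 1) * P := by
    simpa only [Nat.cast_ofNat] using sub_mul_prod_Icc_sub_one_sub (r : ℝ) hn
  rw [div_lt_div_iff₀ (pow_pos (by linarith) n) (pow_pos (by linarith) n)]
  refine lt_of_mul_lt_mul_left ?_ (by linarith : (0 : ℝ) ≤ r - 2)
  calc (r - 2) * (C * P * (r - 1) ^ n) = C * P * ((r - 2) * (r - 1) ^ n) := by ring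
    _ < C * P * ((r - n - 1) * r ^ n) := mul_lt_mul_of_pos_left h (mul_pos hC hP)
    _ = (r - 2) * (C * P' * r ^ n) := by linear_combination (-C * r ^ n) * htele

/-- For `t ≥ 4` and `r ≥ (3t²−5t)/6`, we have `A_{r−1} > A_r`. -/
theorem stmt8 (t r : ℕ) (ht : 4 ≤ t) (hr : 3 * t ^ 2 - 5 * t ≤ 6 * r) :
    Afun t r < Afun t (r - 1) := by
  obtain ⟨n, rfl⟩ : ∃ n, t = n + 2 := ⟨t - 2, by omega⟩
  have hn : 2 ≤ n := by omega
  have hD : 3 * n ^ 2 + 7 * n + 2 ≤ 6 * r := by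
    have : 3 * (n + 2) ^ 2 - 5 * (n + 2) = 3 * n ^ 2 + 7 * n + 2 := by
      rw [Nat.sub_eq_iff_eq_add (by nlinarith)]
      ring
    rwa [this] at hr
  have hnr : n + 1 < r := by nlinarith
  exact Afun_lt_Afun_sub_one hn hnr (sub_two_mul_sub_one_pow_lt hn (by exact_mod_cast hD))
end

section
/- Fix an integer t ≥ 4 and set B_r = C(t,2)·(r−1)(r−2)···(r−(t−2))/r^{t−1} for integers r ≥ t−2, and f = ⌈(t−2)(3t+1)/6⌉. Then B_{r−1} < B_r for every integer r with t−1 ≤ r ≤ f, and B_{r−1} > B_r for every integer r ≥ f+1. In particular B_f = max{B_r : r ≥ t−2}. -/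
/-!
With `y = 1/r`, the ratio `B_r / B_{r-1}` exceeds one exactly when `1 - (t-1) y < (1 - y)^t`,
i.e. when `(r - (t-1)) r^(t-1) < (r-1)^t`. The Bonferroni inequalities squeeze `(1 - y)^t`
between the binomial expansions truncated after degree 5 (below) and degree 4 (above); comparing
these with `1 - (t-1) y` leaves a quartic and a cubic inequality in `r`, which hold for
`t ≤ r ≤ (3t² - 5t + 3)/6` and for `r ≥ (3t² - 5t + 4)/6` respectively. The ceiling `f` is the
last integer of the first range.
-/

noncomputable def Bfun (t r : ℕ) : ℝ :=
  (t.choose 2 : ℝ) * (∏ i ∈ Finset.Icc 1 (t - 2), ((r : ℝ) - (i : ℝ))) / (r : ℝ) ^ (t - 1)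

open Finset

theorem one_sub_pow_bonferroni (n k : ℕ) {y : ℝ} (hy0 : 0 ≤ y) (hy1 : y ≤ 1) :
    0 ≤ (-1) ^ (k + 1) * ((1 - y) ^ n - ∑ i ∈ range (k + 1), (n.choose i : ℝ) * (-y) ^ i) := by
  have pascal : ∀ n k : ℕ, ∑ i ∈ range (k + 1), ((n + 1).choose i : ℝ) * (-y) ^ i =
      (1 - y) * ∑ i ∈ range (k + 1), (n.choose i : ℝ) * (-y) ^ i - n.choose k * (-y) ^ (k + 1) := by
    intro n k
    induction k with
    | zero => simp
    | succ k ih =>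
      rw [sum_range_succ _ (k + 1), sum_range_succ _ (k + 1), ih, Nat.choose_succ_succ',
        Nat.cast_add]
      ring
  induction n with
  | zero => simp [sum_range_succ']
  | succ n ih =>
    have hy : (-1) ^ (k + 1) * (-y) ^ (k + 1) = y ^ (k + 1) := by
      rw [← mul_pow]; ring
    rw [pascal]
    refine (add_nonneg (mul_nonneg (sub_nonneg.2 hy1) ih)
      (mul_nonneg (Nat.cast_nonneg (n.choose k)) (pow_nonneg hy0 (k + 1)))).trans_eq ?_
    rw [← hy]
    ring

theorem cast_choose_two_to_five (t : ℕ) :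
    (t.choose 2 : ℝ) = t * (t - 1) / 2 ∧
    (t.choose 3 : ℝ) = t * (t - 1) * (t - 2) / 6 ∧
    (t.choose 4 : ℝ) = t * (t - 1) * (t - 2) * (t - 3) / 24 ∧
    (t.choose 5 : ℝ) = t * (t - 1) * (t - 2) * (t - 3) * (t - 4) / 120 := by
  norm_num [Nat.cast_choose_eq_descPochhammer_div, descPochhammer_eval_eq_prod_range,
    prod_range_succ, Nat.factorial]

theorem quartic_choose_lt {t : ℕ} {r : ℝ} (ht : 4 ≤ t) (hr : t ≤ r)
    (hr' : 6 * r ≤ 3 * t ^ 2 - 5 * t + 3) :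
    r ^ 4 + t.choose 3 * r ^ 2 + t.choose 5 < t.choose 2 * r ^ 3 + t.choose 4 * r := by
  obtain ⟨h2, h3, h4, h5⟩ := cast_choose_two_to_five t
  rw [h2, h3, h4, h5]
  set n : ℝ := (t : ℝ) - 4 with hn'
  have hn : 0 ≤ n := by rw [hn', sub_nonneg]; exact_mod_cast ht
  have ht' : (t : ℝ) = n + 4 := by rw [hn']; ring
  rw [ht'] at hr hr' ⊢
  -- The difference of the two sides is a nonnegative combination of these products.
  have hq : 0 ≤ r ^ 2 + (4 * n + 19) / 6 * r + (25 * n ^ 2 + 209 * n + 445) / 36 := by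
    have : 0 ≤ r := by linarith
    positivity
  have h1 : 0 ≤ (3 * n ^ 2 + 19 * n + 31 - 6 * r) * ((r - (n + 4)) *
      (r ^ 2 + (4 * n + 19) / 6 * r + (25 * n ^ 2 + 209 * n + 445) / 36)) :=
    mul_nonneg (by linarith) (mul_nonneg (by linarith) hq)
  have h2 : 0 ≤ (3 * n ^ 2 + 19 * n + 31 - 6 * r) *
      (10123 / 216 + 583 / 18 * n + 253 / 36 * n ^ 2 + 19 / 54 * n ^ 3) :=
    mul_nonneg (by linarith) (by positivity)
  have h3 : 0 ≤ (r - (n + 4)) * n ^ 4 := mul_nonneg (by linarith) (by positivity)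
  nlinarith [pow_nonneg hn 2, pow_nonneg hn 3, pow_nonneg hn 4, pow_nonneg hn 5]

theorem cubic_choose_lt {t : ℕ} {r : ℝ} (ht : 4 ≤ t) (hr : 3 * t ^ 2 - 5 * t + 4 ≤ 6 * r) :
    t.choose 2 * r ^ 2 + t.choose 4 < r ^ 3 + t.choose 3 * r := by
  obtain ⟨h2, h3, h4, -⟩ := cast_choose_two_to_five t
  rw [h2, h3, h4]
  set n : ℝ := (t : ℝ) - 4 with hn'
  have hn : 0 ≤ n := by rw [hn', sub_nonneg]; exact_mod_cast ht
  have ht' : (t : ℝ) = n + 4 := by rw [hn']; ring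
  rw [ht'] at hr ⊢
  have h : 0 ≤ (6 * r - (3 * n ^ 2 + 19 * n + 32)) *
      ((2 * r - (n + 2) / 3) ^ 2 + 3 * ((n + 2) / 3) ^ 2) :=
    mul_nonneg (by linarith) (by positivity)
  nlinarith [pow_nonneg hn 2, pow_nonneg hn 3, pow_nonneg hn 4]

theorem sub_one_pow_eq_pow_mul_one_sub_inv_pow {t : ℕ} {r : ℝ} (ht : t ≠ 0) (hr : r ≠ 0) :
    (r - 1) ^ t = r ^ (t - 1) * (r * (1 - r⁻¹) ^ t) := by
  rw [← mul_assoc, pow_sub_one_mul ht, ← mul_pow, mul_sub, mul_one, mul_inv_cancel₀ hr]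

theorem sub_mul_pow_lt_sub_one_pow {t : ℕ} {r : ℝ} (ht : 4 ≤ t) (hr : t ≤ r)
    (hr' : 6 * r ≤ 3 * t ^ 2 - 5 * t + 3) :
    (r - (t - 1)) * r ^ (t - 1) < (r - 1) ^ t := by
  have hr0 : 0 < r := by linarith [show (4 : ℝ) ≤ t by exact_mod_cast ht]
  have hS := one_sub_pow_bonferroni t 5 (inv_nonneg.2 hr0.le)
    (inv_le_one_of_one_le₀ (by linarith [show (4 : ℝ) ≤ t by exact_mod_cast ht]))
  set S := ∑ i ∈ range 6, (t.choose i : ℝ) * (-r⁻¹) ^ i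
  have hS_sub : r * S - (r - (t - 1)) =
      (t.choose 2 * r ^ 3 + t.choose 4 * r - (r ^ 4 + t.choose 3 * r ^ 2 + t.choose 5)) /
        r ^ 4 := by
    simp only [S, sum_range_succ, sum_range_zero, Nat.choose_zero_right, Nat.choose_one_right]
    field_simp
    ring
  have hpos := div_pos (sub_pos.2 (quartic_choose_lt ht hr hr')) (pow_pos hr0 4)
  rw [sub_one_pow_eq_pow_mul_one_sub_inv_pow (by omega) hr0.ne', mul_comm]
  refine mul_lt_mul_of_pos_left ?_ (pow_pos hr0 _)
  calc r - (t - 1) < r * S := by linarith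
    _ ≤ r * (1 - r⁻¹) ^ t := mul_le_mul_of_nonneg_left (by norm_num at hS; linarith) hr0.le

theorem sub_one_pow_lt_sub_mul_pow {t : ℕ} {r : ℝ} (ht : 4 ≤ t)
    (hr : 3 * t ^ 2 - 5 * t + 4 ≤ 6 * r) :
    (r - 1) ^ t < (r - (t - 1)) * r ^ (t - 1) := by
  have hr1 : 1 ≤ r := by nlinarith [show (4 : ℝ) ≤ t by exact_mod_cast ht]
  have hr0 : 0 < r := by linarith
  have hS := one_sub_pow_bonferroni t 4 (inv_nonneg.2 hr0.le) (inv_le_one_of_one_le₀ hr1)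
  set S := ∑ i ∈ range 5, (t.choose i : ℝ) * (-r⁻¹) ^ i
  have hS_sub : (r - (t - 1)) - r * S =
      (r ^ 3 + t.choose 3 * r - (t.choose 2 * r ^ 2 + t.choose 4)) / r ^ 3 := by
    simp only [S, sum_range_succ, sum_range_zero, Nat.choose_zero_right, Nat.choose_one_right]
    field_simp
    ring
  have hpos := div_pos (sub_pos.2 (cubic_choose_lt ht hr)) (pow_pos hr0 3)
  rw [sub_one_pow_eq_pow_mul_one_sub_inv_pow (by omega) hr0.ne', mul_comm _ (r ^ (t - 1))]
  refine mul_lt_mul_of_pos_left ?_ (pow_pos hr0 _)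
  calc r * (1 - r⁻¹) ^ t ≤ r * S := mul_le_mul_of_nonneg_left (by norm_num at hS; linarith) hr0.le
    _ < r - (t - 1) := by linarith

theorem prod_Icc_sub_one_sub_mul (n : ℕ) (x : ℝ) :
    (∏ i ∈ Icc 1 n, (x - 1 - i)) * (x - 1) = (∏ i ∈ Icc 1 n, (x - i)) * (x - (n + 1)) := by
  induction n with
  | zero => simp
  | succ n ih =>
    rw [prod_Icc_succ_top (by omega), prod_Icc_succ_top (by omega)]
    push_cast
    linear_combination (x - (n + 2)) * ih

theorem Bfun_pos {t r : ℕ} (ht : 2 ≤ t) (hr : t - 2 < r) : 0 < Bfun t r := by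
  refine div_pos (mul_pos (by exact_mod_cast Nat.choose_pos ht) (prod_pos fun i hi => ?_))
    (pow_pos (by exact_mod_cast Nat.zero_lt_of_lt hr) _)
  have : i < r := (mem_Icc.1 hi).2.trans_lt hr
  exact sub_pos.2 (by exact_mod_cast this)

theorem Bfun_sub_one_mul_pow {t r : ℕ} (ht : 2 ≤ t) (hr : 2 ≤ r) :
    Bfun t (r - 1) * ((r : ℝ) - 1) ^ t = Bfun t r * ((r - (t - 1)) * (r : ℝ) ^ (t - 1)) := by
  obtain ⟨s, rfl⟩ : ∃ s, t = s + 2 := ⟨t - 2, by omega⟩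
  have hr1 : (r : ℝ) - 1 ≠ 0 := by
    rw [sub_ne_zero]; exact_mod_cast (by omega : r ≠ 1)
  have hr0 : (r : ℝ) ≠ 0 := by exact_mod_cast (by omega : r ≠ 0)
  simp only [Bfun, Nat.cast_sub (by omega : 1 ≤ r), Nat.cast_one, Nat.add_sub_cancel,
    show s + 2 - 1 = s + 1 by omega]
  field_simp
  push_cast
  linear_combination
    (((s + 2).choose 2 : ℝ) * ((r : ℝ) - 1) ^ (s + 1)) * prod_Icc_sub_one_sub_mul s r

theorem Bfun_sub_one_lt_iff {t r : ℕ} (ht : 3 ≤ t) (hr : t - 1 ≤ r) :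
    Bfun t (r - 1) < Bfun t r ↔ ((r : ℝ) - (t - 1)) * (r : ℝ) ^ (t - 1) < ((r : ℝ) - 1) ^ t := by
  have hr1 : (0 : ℝ) < (r : ℝ) - 1 := sub_pos.2 (by exact_mod_cast (by omega : 1 < r))
  rw [← mul_lt_mul_iff_left₀ (pow_pos hr1 t), Bfun_sub_one_mul_pow (by omega) (by omega),
    mul_lt_mul_iff_right₀ (Bfun_pos (by omega) (by omega))]

theorem Bfun_lt_sub_one_iff {t r : ℕ} (ht : 3 ≤ t) (hr : t - 1 ≤ r) :
    Bfun t r < Bfun t (r - 1) ↔ ((r : ℝ) - 1) ^ t < ((r : ℝ) - (t - 1)) * (r : ℝ) ^ (t - 1) := by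
  have hr1 : (0 : ℝ) < (r : ℝ) - 1 := sub_pos.2 (by exact_mod_cast (by omega : 1 < r))
  rw [← mul_lt_mul_iff_left₀ (pow_pos hr1 t), Bfun_sub_one_mul_pow (by omega) (by omega),
    mul_lt_mul_iff_right₀ (Bfun_pos (by omega) (by omega))]

theorem six_mul_ceil_bounds {t f : ℕ} (ht : 2 ≤ t)
    (hf : f = ⌈(((t : ℚ) - 2) * (3 * (t : ℚ) + 1)) / 6⌉₊) :
    (3 * t ^ 2 - 5 * t - 2 : ℝ) ≤ 6 * f ∧ (6 * f : ℝ) ≤ 3 * t ^ 2 - 5 * t + 3 := by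
  have ht' : (2 : ℚ) ≤ t := by exact_mod_cast ht
  have hq : 0 ≤ ((t : ℚ) - 2) * (3 * t + 1) / 6 :=
    div_nonneg (mul_nonneg (sub_nonneg.2 ht') (by positivity)) (by norm_num)
  have hle : ((t : ℚ) - 2) * (3 * t + 1) / 6 ≤ f := hf ▸ Nat.le_ceil _
  have hlt : (f : ℚ) < ((t : ℚ) - 2) * (3 * t + 1) / 6 + 1 := hf ▸ Nat.ceil_lt_add_one hq
  have hlo : (3 * t ^ 2 - 5 * t - 2 : ℚ) ≤ 6 * f := by linarith
  have hhi : (6 * f : ℤ) ≤ 3 * t ^ 2 - 5 * t + 3 :=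
    Int.lt_add_one_iff.1 (by exact_mod_cast (by linarith : (6 * f : ℚ) < 3 * t ^ 2 - 5 * t + 3 + 1))
  exact ⟨by exact_mod_cast hlo, by exact_mod_cast hhi⟩

/-- For `t ≥ 4` and `f = ⌈(t−2)(3t+1)/6⌉`: `B_{r−1} < B_r` for `t−1 ≤ r ≤ f`,
`B_{r−1} > B_r` for `r ≥ f+1`; in particular `B_f = max{B_r : r ≥ t−2}`. -/
theorem stmt9 (t : ℕ) (ht : 4 ≤ t) (f : ℕ)
    (hf : f = ⌈(((t : ℚ) - 2) * (3 * (t : ℚ) + 1)) / 6⌉₊) :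
    (∀ r : ℕ, t - 1 ≤ r → r ≤ f → Bfun t (r - 1) < Bfun t r) ∧
    (∀ r : ℕ, f + 1 ≤ r → Bfun t r < Bfun t (r - 1)) ∧
    (∀ r : ℕ, t - 2 ≤ r → Bfun t r ≤ Bfun t f) := by
  obtain ⟨hf_lo, hf_hi⟩ := six_mul_ceil_bounds (by omega) hf
  have ht' : (4 : ℝ) ≤ t := by exact_mod_cast ht
  have htf : t ≤ f := by exact_mod_cast (by nlinarith : (t : ℝ) ≤ f)
  have increasing : ∀ r : ℕ, t - 1 ≤ r → r ≤ f → Bfun t (r - 1) < Bfun t r := by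
    intro r hr hrf
    rw [Bfun_sub_one_lt_iff (by omega) hr]
    rcases hr.eq_or_lt with rfl | hr
    · rw [Nat.cast_sub (by omega), Nat.cast_one, sub_self, zero_mul]
      exact pow_pos (by linarith) t
    · refine sub_mul_pow_lt_sub_one_pow ht (by exact_mod_cast (by omega : t ≤ r)) ?_
      have : (r : ℝ) ≤ f := by exact_mod_cast hrf
      linarith
  have decreasing : ∀ r : ℕ, f + 1 ≤ r → Bfun t r < Bfun t (r - 1) := by
    intro r hr
    rw [Bfun_lt_sub_one_iff (by omega) (by omega)]
    refine sub_one_pow_lt_sub_mul_pow ht ?_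
    have : (f : ℝ) + 1 ≤ r := by exact_mod_cast hr
    linarith
  have hmono : StrictMonoOn (Bfun t) (Set.Icc (t - 2) f) :=
    strictMonoOn_of_lt_add_one Set.ordConnected_Icc fun a _ ha ha1 => by
      simpa using increasing (a + 1) (by have := ha.1; omega) ha1.2
  have hanti : StrictAntiOn (Bfun t) (Set.Ici f) :=
    strictAntiOn_of_add_one_lt Set.ordConnected_Ici fun a _ ha _ => by
      simpa using decreasing (a + 1) (Nat.add_le_add_right ha 1)
  refine ⟨increasing, decreasing, fun r hr => ?_⟩
  rcases le_total r f with h | h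
  · exact hmono.monotoneOn ⟨hr, h⟩ ⟨by omega, le_rfl⟩ h
  · exact hanti.antitoneOn Set.self_mem_Ici h h
end

section
/- For t ≥ 4, define h: [0,1] → ℝ by h(y) = 1 − ty + ty^{t−1} − y^t. Then h is strictly convex on (0,1], h(0) = 1, h(1) = 0, h'(1) = t(t−3) > 0, and there exists a unique y* ∈ (0,1) with h(y*) = 0, h > 0 on [0, y*), and h < 0 on (y*, 1). Moreover 1/t < y* < 1/(t−1). -/
/-!
Differentiating twice gives `h''(y) = t(t-1) y^(t-3) (t-2-y)`, positive on `(0,1)`, so `h` is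
strictly convex on `(0,1]`. Since `h(1/t) = t^(2-t) - t^(-t) > 0` and `h(1/(t-1)) < 0`, the
intermediate value theorem gives a root `y*` in between. A strictly convex function vanishing at
`y*` and at `1` is negative strictly between them and positive to the left of `y*`; these signs
also make `y*` the only root in `(0,1)`.
-/

open Set

section StrictConvexOn

variable {𝕜 : Type*} [Field 𝕜] [LinearOrder 𝕜] [IsStrictOrderedRing 𝕜] {s : Set 𝕜} {f : 𝕜 → 𝕜}
  {x y z : 𝕜}

theorem StrictConvexOn.neg_of_mem_Ioo_of_eq_zero (hf : StrictConvexOn 𝕜 s f) (hx : x ∈ s)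
    (hy : y ∈ s) (hfx : f x = 0) (hfy : f y = 0) (hz : z ∈ Ioo x y) : f z < 0 := by
  have hxy := hz.1.trans hz.2
  have := hf.lt_on_openSegment hx hy hxy.ne (by rwa [openSegment_eq_Ioo hxy])
  rwa [hfx, hfy, max_self] at this

theorem StrictConvexOn.pos_of_lt_of_eq_zero (hf : StrictConvexOn 𝕜 s f) (hz : z ∈ s)
    (hy : y ∈ s) (hfx : f x = 0) (hfy : f y = 0) (hzx : z < x) (hxy : x < y) : 0 < f z := by
  have := hf.secant_strict_mono_aux1 hz hy hzx hxy
  rw [hfx, hfy, mul_zero, mul_zero, add_zero] at this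
  exact pos_of_mul_pos_right this (sub_pos.mpr hxy).le

end StrictConvexOn

def hPoly (t : ℕ) (y : ℝ) : ℝ := 1 - t * y + t * y ^ (t - 1) - y ^ t

def hPolyDeriv (t : ℕ) (y : ℝ) : ℝ := -t + t * (t - 1) * y ^ (t - 2) - t * y ^ (t - 1)

section

variable {t : ℕ}

theorem hasDerivAt_hPoly (ht : 1 ≤ t) (y : ℝ) : HasDerivAt (hPoly t) (hPolyDeriv t y) y := by
  obtain ⟨k, rfl⟩ := Nat.exists_eq_add_of_le' ht
  have h := ((((hasDerivAt_id' y).const_mul ((k + 1 : ℕ) : ℝ)).const_sub 1).add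
    ((hasDerivAt_pow k y).const_mul ((k + 1 : ℕ) : ℝ))).sub (hasDerivAt_pow (k + 1) y)
  refine h.congr_deriv ?_
  simp only [hPolyDeriv, show k + 1 - 2 = k - 1 by omega, Nat.add_sub_cancel]
  push_cast
  ring

theorem deriv_hPoly (ht : 1 ≤ t) : deriv (hPoly t) = hPolyDeriv t :=
  funext fun y => (hasDerivAt_hPoly ht y).deriv

theorem hasDerivAt_hPolyDeriv (ht : 3 ≤ t) (y : ℝ) :
    HasDerivAt (hPolyDeriv t) (t * (t - 1) * y ^ (t - 3) * (t - 2 - y)) y := by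
  obtain ⟨k, rfl⟩ := Nat.exists_eq_add_of_le' ht
  have h := (((hasDerivAt_pow (k + 1) y).const_mul
      (((k + 3 : ℕ) : ℝ) * ((k + 3 : ℕ) - 1))).const_add (-((k + 3 : ℕ) : ℝ))).sub
    ((hasDerivAt_pow (k + 2) y).const_mul ((k + 3 : ℕ) : ℝ))
  refine h.congr_deriv ?_
  simp only [show k + 3 - 3 = k by omega, show k + 2 - 1 = k + 1 by omega, Nat.add_sub_cancel,
    Nat.cast_add, pow_succ]
  push_cast
  ring

theorem continuous_hPoly : Continuous (hPoly t) := by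
  unfold hPoly
  fun_prop

theorem strictConvexOn_hPoly (ht : 3 ≤ t) : StrictConvexOn ℝ (Ioc 0 1) (hPoly t) := by
  refine strictConvexOn_of_deriv2_pos (convex_Ioc 0 1) continuous_hPoly.continuousOn fun y hy => ?_
  rw [interior_Ioc] at hy
  change 0 < deriv (deriv (hPoly t)) y
  rw [deriv_hPoly (by omega), (hasDerivAt_hPolyDeriv ht y).deriv]
  have ht' : (3 : ℝ) ≤ t := by exact_mod_cast ht
  have hy_pow : 0 < y ^ (t - 3) := pow_pos hy.1 _
  exact mul_pos (mul_pos (mul_pos (by linarith) (by linarith)) hy_pow) (by linarith [hy.2])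

theorem hPoly_zero (ht : 2 ≤ t) : hPoly t 0 = 1 := by
  simp [hPoly, zero_pow (show t - 1 ≠ 0 by omega), zero_pow (show t ≠ 0 by omega)]

theorem hPoly_one (t : ℕ) : hPoly t 1 = 0 := by
  simp [hPoly]

theorem hPolyDeriv_one (t : ℕ) : hPolyDeriv t 1 = t * (t - 3) := by
  simp only [hPolyDeriv, one_pow]
  ring

theorem hPoly_one_div_pos (ht : 2 ≤ t) : 0 < hPoly t (1 / t) := by
  have ht' : (2 : ℝ) ≤ t := by exact_mod_cast ht
  have hinv_lt : 1 / (t : ℝ) < t := by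
    rw [div_lt_iff₀ (by positivity)]
    nlinarith
  have hlt := mul_lt_mul_of_pos_left hinv_lt (pow_pos (by positivity : (0 : ℝ) < 1 / t) (t - 1))
  rw [hPoly, ← pow_sub_one_mul (by omega : t ≠ 0), mul_one_div_cancel (by positivity)]
  linarith

theorem hPoly_one_div_sub_one_neg (ht : 4 ≤ t) : hPoly t (1 / (t - 1)) < 0 := by
  have ht' : (4 : ℝ) ≤ t := by exact_mod_cast ht
  set y : ℝ := 1 / (t - 1)
  have hy : 0 < y := one_div_pos.mpr (by linarith)
  have hsy : (t - 1) * y = 1 := mul_one_div_cancel (by linarith)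
  have hts : (t : ℝ) < (t - 1) ^ (t - 2) := calc
    (t : ℝ) < (t - 1) ^ 2 := by nlinarith
    _ ≤ (t - 1) ^ (t - 2) := pow_le_pow_right₀ (by linarith) (by omega)
  have hty : t * y ^ (t - 2) < 1 := calc
    t * y ^ (t - 2) < (t - 1) ^ (t - 2) * y ^ (t - 2) := mul_lt_mul_of_pos_right hts (pow_pos hy _)
    _ = 1 := by rw [← mul_pow, hsy, one_pow]
  have hty' : t * y ^ (t - 1) < y := calc
    t * y ^ (t - 1) = t * y ^ (t - 2) * y := by
      rw [mul_assoc, ← pow_succ, show t - 2 + 1 = t - 1 by omega]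
    _ < 1 * y := mul_lt_mul_of_pos_right hty hy
    _ = y := one_mul y
  have hpow : 0 < y ^ t := pow_pos hy t
  rw [hPoly]
  linarith

theorem exists_hPoly_eq_zero (ht : 4 ≤ t) :
    ∃ ys ∈ Ioo (1 / (t : ℝ)) (1 / (t - 1)), hPoly t ys = 0 := by
  have ht' : (4 : ℝ) ≤ t := by exact_mod_cast ht
  have hlt : 1 / (t : ℝ) < 1 / (t - 1) := one_div_lt_one_div_of_lt (by linarith) (by linarith)
  exact intermediate_value_Ioo' hlt.le continuous_hPoly.continuousOn
    ⟨hPoly_one_div_sub_one_neg ht, hPoly_one_div_pos (by omega)⟩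

variable {ys z : ℝ}

theorem hPoly_neg_of_root_lt (ht : 3 ≤ t) (hys : ys ∈ Ioo 0 1) (hroot : hPoly t ys = 0)
    (hz : z ∈ Ioo ys 1) : hPoly t z < 0 :=
  (strictConvexOn_hPoly ht).neg_of_mem_Ioo_of_eq_zero ⟨hys.1, hys.2.le⟩ ⟨one_pos, le_rfl⟩ hroot
    (hPoly_one t) hz

theorem hPoly_pos_of_lt_root (ht : 3 ≤ t) (hys : ys ∈ Ioo 0 1) (hroot : hPoly t ys = 0)
    (hz : z ∈ Ico 0 ys) : 0 < hPoly t z := by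
  rcases hz.1.eq_or_lt with rfl | hz0
  · rw [hPoly_zero (by omega)]
    exact one_pos
  · exact (strictConvexOn_hPoly ht).pos_of_lt_of_eq_zero ⟨hz0, (hz.2.trans hys.2).le⟩
      ⟨one_pos, le_rfl⟩ hroot (hPoly_one t) hz.2 hys.2

end

/-- For `t ≥ 4`, the function `h(y) = 1 − ty + ty^{t−1} − y^t` is strictly convex on
`(0,1]`, satisfies `h(0) = 1`, `h(1) = 0`, `h'(1) = t(t−3) > 0`, and has a unique zero
`y* ∈ (0,1)`, with `h > 0` on `[0,y*)` and `h < 0` on `(y*,1)`; moreover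
`1/t < y* < 1/(t−1)`. -/
theorem stmt13 (t : ℕ) (ht : 4 ≤ t) :
    StrictConvexOn ℝ (Set.Ioc (0 : ℝ) 1)
      (fun y : ℝ => 1 - t * y + t * y ^ (t - 1) - y ^ t) ∧
    (1 - (t : ℝ) * 0 + t * (0 : ℝ) ^ (t - 1) - (0 : ℝ) ^ t = 1) ∧
    (1 - (t : ℝ) * 1 + t * (1 : ℝ) ^ (t - 1) - (1 : ℝ) ^ t = 0) ∧
    deriv (fun y : ℝ => 1 - t * y + t * y ^ (t - 1) - y ^ t) 1 = (t : ℝ) * ((t : ℝ) - 3) ∧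
    (0 : ℝ) < (t : ℝ) * ((t : ℝ) - 3) ∧
    (∃! ys : ℝ, ys ∈ Set.Ioo (0 : ℝ) 1 ∧
      (1 - (t : ℝ) * ys + t * ys ^ (t - 1) - ys ^ t = 0) ∧
      (∀ z ∈ Set.Ico (0 : ℝ) ys, 0 < 1 - (t : ℝ) * z + t * z ^ (t - 1) - z ^ t) ∧
      (∀ z ∈ Set.Ioo ys (1 : ℝ), 1 - (t : ℝ) * z + t * z ^ (t - 1) - z ^ t < 0) ∧
      1 / (t : ℝ) < ys ∧ ys < 1 / ((t : ℝ) - 1)) := by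
  have ht' : (4 : ℝ) ≤ t := by exact_mod_cast ht
  obtain ⟨ys, hys, hroot⟩ := exists_hPoly_eq_zero ht
  have hys01 : ys ∈ Ioo 0 1 := ⟨(one_div_pos.mpr (by linarith)).trans hys.1,
    hys.2.trans (by rw [div_lt_one (by linarith)]; linarith)⟩
  have hpos : ∀ z ∈ Ico 0 ys, 0 < hPoly t z := fun _ => hPoly_pos_of_lt_root (by omega) hys01 hroot
  have hneg : ∀ z ∈ Ioo ys 1, hPoly t z < 0 := fun _ => hPoly_neg_of_root_lt (by omega) hys01 hroot
  refine ⟨strictConvexOn_hPoly (by omega), hPoly_zero (by omega), hPoly_one t,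
    (hasDerivAt_hPoly (by omega) 1).deriv.trans (hPolyDeriv_one t), by nlinarith,
    ys, ⟨hys01, hroot, hpos, hneg, hys.1, hys.2⟩, ?_⟩
  rintro y ⟨hy, hy_root, -⟩
  by_contra hne
  rcases lt_or_gt_of_ne hne with hlt | hgt
  · exact (hpos y ⟨hy.1.le, hlt⟩).ne' hy_root
  · exact (hneg y ⟨hgt, hy.2⟩).ne hy_root
end

section
/- For every integer t ≥ 4, there is a unique x*(t) ∈ (2t/(t+1)², 2/(t+1)) such that s_t is strictly increasing on [0, x*(t)] and strictly decreasing on [x*(t), 1/2], where s_t(x) = ((t+1)/2^t)·x·((1−√(1−2x))^{t−1}+(1+√(1−2x))^{t−1}). -/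
/-!
The substitution `x = 2y/(1+y)²` is an increasing bijection `[0,1] → [0,1/2]` with inverse
`y = (1 - √(1-2x))/(1 + √(1-2x))`, and it turns `s_t` into
`g_t(y) = (t+1)(y + y^t)/(1+y)^(t+1)`, whose derivative is `(t+1) h_t(y)/(1+y)^(t+2)` with
`h_t(y) = 1 - ty + ty^(t-1) - y^t`. Now `h_t' = t((t-1)y^(t-2) - y^(t-1) - 1)`, and
`(t-1)y^(t-2) - y^(t-1)` increases from `0` to `t - 2 > 1` on `[0,1]`, so `h_t` first decreases
and then increases. As `h_t(0) = 1` and `h_t(1) = 0`, it changes sign exactly once on `[0,1)`,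
at a point `y*` which `h_t(1/t) > 0 > h_t(1/(t-1))` places in `(1/t, 1/(t-1))`; the turning
point of `s_t` is `x* = 2y*/(1+y*)²`, and a function has at most one such turning point.
-/

/-- `s_t(x) = ((t+1)/2^t)·x·((1−√(1−2x))^{t−1} + (1+√(1−2x))^{t−1})`. -/
noncomputable def sfun (t : ℕ) (x : ℝ) : ℝ :=
  ((t : ℝ) + 1) / 2 ^ t * x *
    ((1 - Real.sqrt (1 - 2 * x)) ^ (t - 1) + (1 + Real.sqrt (1 - 2 * x)) ^ (t - 1))

open Set

lemma eq_of_strictMonoOn_of_strictAntiOn {α β : Type*} [LinearOrder α] [Preorder β]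
    {f : α → β} {a b u v : α} (hu : u ∈ Icc a b) (hv : v ∈ Icc a b)
    (hmu : StrictMonoOn f (Icc a u)) (hau : StrictAntiOn f (Icc u b))
    (hmv : StrictMonoOn f (Icc a v)) (hav : StrictAntiOn f (Icc v b)) : u = v := by
  rcases lt_trichotomy u v with huv | rfl | hvu
  · exact absurd (hmv ⟨hu.1, huv.le⟩ ⟨hv.1, le_rfl⟩ huv)
      (hau ⟨le_rfl, hu.2⟩ ⟨huv.le, hv.2⟩ huv).asymm
  · rfl
  · exact absurd (hmu ⟨hv.1, hvu.le⟩ ⟨hu.1, le_rfl⟩ hvu)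
      (hav ⟨le_rfl, hv.2⟩ ⟨hvu.le, hu.2⟩ hvu).asymm

lemma exists_sign_change_of_strictAntiOn_of_strictMonoOn {h : ℝ → ℝ} {a b c : ℝ}
    (hac : a ≤ c) (hcb : c < b) (hcont : ContinuousOn h (Icc a c))
    (hanti : StrictAntiOn h (Icc a c)) (hmono : StrictMonoOn h (Icc c b))
    (ha : 0 < h a) (hb : h b = 0) :
    ∃ z ∈ Ioo a c, h z = 0 ∧ (∀ x ∈ Ico a z, 0 < h x) ∧ ∀ x ∈ Ioo z b, h x < 0 := by
  have hc : h c < 0 := hb ▸ hmono ⟨le_rfl, hcb.le⟩ ⟨hcb.le, le_rfl⟩ hcb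
  obtain ⟨z, hz, hz0⟩ := intermediate_value_Ioo' hac hcont ⟨hc, ha⟩
  refine ⟨z, hz, hz0, fun x hx => ?_, fun x hx => ?_⟩
  · exact hz0 ▸ hanti ⟨hx.1, hx.2.le.trans hz.2.le⟩ ⟨hz.1.le, hz.2.le⟩ hx.2
  · rcases le_or_gt x c with hxc | hcx
    · exact hz0 ▸ hanti ⟨hz.1.le, hz.2.le⟩ ⟨hz.1.le.trans hx.1.le, hxc⟩ hx.1
    · exact hb ▸ hmono ⟨hcx.le, hx.2.le⟩ ⟨hcb.le, le_rfl⟩ hx.2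

noncomputable def hfun (t : ℕ) (y : ℝ) : ℝ := 1 - t * y + t * y ^ (t - 1) - y ^ t

lemma strictMonoOn_mul_pow_sub_pow {k : ℕ} (hk : 1 ≤ k) :
    StrictMonoOn (fun y : ℝ => (k + 1) * y ^ k - y ^ (k + 1)) (Icc 0 1) := by
  obtain ⟨n, rfl⟩ : ∃ n, k = n + 1 := ⟨k - 1, by omega⟩
  refine strictMonoOn_of_deriv_pos (convex_Icc 0 1) (by fun_prop) fun y hy => ?_
  rw [interior_Icc] at hy
  have hd : HasDerivAt (fun y : ℝ => (↑(n + 1) + 1) * y ^ (n + 1) - y ^ (n + 1 + 1))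
      ((n + 2) * y ^ n * ((n + 1) - y)) y := by
    refine (((hasDerivAt_pow (n + 1) y).const_mul _).sub (hasDerivAt_pow (n + 2) y)).congr_deriv ?_
    simp only [Nat.add_sub_cancel]
    push_cast; ring
  rw [hd.deriv]
  have := pow_pos hy.1 n
  exact mul_pos (by positivity) (by linarith [hy.2, n.cast_nonneg (α := ℝ)])

lemma hasDerivAt_hfun (k : ℕ) (y : ℝ) :
    HasDerivAt (hfun (k + 2)) ((k + 2) * ((k + 1) * y ^ k - y ^ (k + 1) - 1)) y := by
  unfold hfun
  simp only [show k + 2 - 1 = k + 1 by omega]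
  refine (((((hasDerivAt_id' y).const_mul _).const_sub 1).add
    ((hasDerivAt_pow (k + 1) y).const_mul _)).sub (hasDerivAt_pow (k + 2) y)).congr_deriv ?_
  simp only [Nat.add_sub_cancel]
  push_cast; ring

lemma hfun_one_div_pos {t : ℕ} (ht : 2 ≤ t) : 0 < hfun t (1 / t) := by
  obtain ⟨k, rfl⟩ : ∃ k, t = k + 1 := ⟨t - 1, by omega⟩
  have : (1:ℝ) ≤ k := by exact_mod_cast (by omega : 1 ≤ k)
  have key : hfun (k + 1) (1 / (k + 1 : ℕ)) = ((k + 1) ^ 2 - 1) / (k + 1) ^ (k + 1) := by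
    simp only [hfun, Nat.add_sub_cancel, one_div, inv_pow]
    push_cast
    field_simp
    ring
  rw [key]
  exact div_pos (by nlinarith) (by positivity)

lemma hfun_one_div_sub_one_neg {t : ℕ} (ht : 4 ≤ t) : hfun t (1 / (t - 1)) < 0 := by
  obtain ⟨u, rfl⟩ : ∃ u, t = u + 1 := ⟨t - 1, by omega⟩
  have hu : (3:ℝ) ≤ u := by exact_mod_cast (by omega : 3 ≤ u)
  have key : hfun (u + 1) (1 / ((u + 1 : ℕ) - 1)) = (u ^ 2 + u - 1 - u ^ u) / u ^ (u + 1) := by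
    simp only [hfun, Nat.add_sub_cancel, one_div, inv_pow]
    push_cast
    rw [add_sub_cancel_right]
    have : (u:ℝ) ≠ 0 := (by linarith : (0:ℝ) < u).ne'
    field_simp
    ring
  have hpow : (u:ℝ) ^ 3 ≤ (u:ℝ) ^ u := pow_le_pow_right₀ (by linarith) (by omega)
  rw [key]
  exact div_neg_of_neg_of_pos (by nlinarith) (by positivity)

lemma exists_hfun_strictAntiOn_strictMonoOn {t : ℕ} (ht : 4 ≤ t) :
    ∃ c ∈ Ioo (0:ℝ) 1,
      StrictAntiOn (hfun t) (Icc 0 c) ∧ StrictMonoOn (hfun t) (Icc c 1) := by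
  obtain ⟨k, rfl⟩ : ∃ k, t = k + 2 := ⟨t - 2, by omega⟩
  set q : ℝ → ℝ := fun y => (k + 1) * y ^ k - y ^ (k + 1)
  have hq : StrictMonoOn q (Icc 0 1) := strictMonoOn_mul_pow_sub_pow (by omega)
  have hk : (2:ℝ) ≤ k := by exact_mod_cast (by omega : 2 ≤ k)
  obtain ⟨c, hc, hqc⟩ : ∃ c ∈ Ioo (0:ℝ) 1, q c = 1 := by
    refine intermediate_value_Ioo zero_le_one (by fun_prop) ⟨?_, ?_⟩
    · simp [q, show k ≠ 0 by omega]
    · simp only [q, one_pow]; linarith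
  have hcont : Continuous (hfun (k + 2)) :=
    continuous_iff_continuousAt.2 fun y => (hasDerivAt_hfun k y).continuousAt
  refine ⟨c, hc, ?_, ?_⟩
  · refine strictAntiOn_of_deriv_neg (convex_Icc 0 c) hcont.continuousOn fun y hy => ?_
    rw [interior_Icc] at hy
    have : q y < 1 := hqc ▸ hq ⟨hy.1.le, hy.2.le.trans hc.2.le⟩ ⟨hc.1.le, hc.2.le⟩ hy.2
    rw [(hasDerivAt_hfun k y).deriv]
    exact mul_neg_of_pos_of_neg (by positivity) (by simp only [q] at this; linarith)
  · refine strictMonoOn_of_deriv_pos (convex_Icc c 1) hcont.continuousOn fun y hy => ?_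
    rw [interior_Icc] at hy
    have : 1 < q y := hqc ▸ hq ⟨hc.1.le, hc.2.le⟩ ⟨hc.1.le.trans hy.1.le, hy.2.le⟩ hy.1
    rw [(hasDerivAt_hfun k y).deriv]
    exact mul_pos (by positivity) (by simp only [q] at this; linarith)

lemma exists_hfun_sign_change {t : ℕ} (ht : 4 ≤ t) :
    ∃ z ∈ Ioo (1 / (t:ℝ)) (1 / ((t:ℝ) - 1)),
      (∀ y ∈ Ico 0 z, 0 < hfun t y) ∧ ∀ y ∈ Ioo z 1, hfun t y < 0 := by
  obtain ⟨c, hc, hanti, hmono⟩ := exists_hfun_strictAntiOn_strictMonoOn ht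
  have h0 : hfun t 0 = 1 := by simp [hfun, show t - 1 ≠ 0 by omega, show t ≠ 0 by omega]
  have h1 : hfun t 1 = 0 := by simp [hfun]
  have hcont : ContinuousOn (hfun t) (Icc 0 c) := by unfold hfun; fun_prop
  obtain ⟨z, hz, hz0, hpos, hneg⟩ := exists_sign_change_of_strictAntiOn_of_strictMonoOn
    hc.1.le hc.2 hcont hanti hmono (h0 ▸ one_pos) h1
  have ht' : (4:ℝ) ≤ t := by exact_mod_cast ht
  refine ⟨z, ⟨?_, ?_⟩, hpos, hneg⟩
  · by_contra! hle
    have := hfun_one_div_pos (t := t) (by omega)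
    rcases hle.eq_or_lt with heq | hlt
    · exact this.ne' (heq ▸ hz0)
    · exact this.not_gt (hneg _ ⟨hlt, by rw [div_lt_one] <;> linarith⟩)
  · by_contra! hle
    have := hfun_one_div_sub_one_neg ht
    rcases hle.eq_or_lt with heq | hlt
    · exact this.ne (heq ▸ hz0)
    · exact this.not_gt (hpos _ ⟨by rw [one_div_nonneg]; linarith, hlt⟩)

noncomputable def gfun (t : ℕ) (y : ℝ) : ℝ := (t + 1) * (y + y ^ t) / (1 + y) ^ (t + 1)

lemma hasDerivAt_gfun {t : ℕ} (ht : 1 ≤ t) {y : ℝ} (hy : 1 + y ≠ 0) :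
    HasDerivAt (gfun t) ((t + 1) * hfun t y / (1 + y) ^ (t + 2)) y := by
  obtain ⟨n, rfl⟩ : ∃ n, t = n + 1 := ⟨t - 1, by omega⟩
  have hnum : HasDerivAt (fun y : ℝ => ((n + 1 : ℕ) + 1 : ℝ) * (y + y ^ (n + 1)))
      (((n + 1 : ℕ) + 1 : ℝ) * (1 + (n + 1 : ℕ) * y ^ n)) y :=
    ((hasDerivAt_id' y).add (hasDerivAt_pow (n + 1) y)).const_mul _
  have hden :
      HasDerivAt (fun y : ℝ => (1 + y) ^ (n + 2)) ((n + 2 : ℕ) * (1 + y) ^ (n + 1)) y := by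
    refine (((hasDerivAt_id' y).const_add 1).pow (n + 2)).congr_deriv ?_
    simp
  refine (hnum.div hden (pow_ne_zero _ hy)).congr_deriv ?_
  simp only [hfun, Nat.add_sub_cancel]
  field_simp
  push_cast
  ring

lemma exists_gfun_strictMonoOn_strictAntiOn {t : ℕ} (ht : 4 ≤ t) :
    ∃ z ∈ Ioo (1 / (t:ℝ)) (1 / ((t:ℝ) - 1)),
      StrictMonoOn (gfun t) (Icc 0 z) ∧ StrictAntiOn (gfun t) (Icc z 1) := by
  obtain ⟨z, hz, hpos, hneg⟩ := exists_hfun_sign_change ht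
  have ht' : (4:ℝ) ≤ t := by exact_mod_cast ht
  have hderiv : ∀ y : ℝ, 0 ≤ y →
      HasDerivAt (gfun t) ((t + 1) * hfun t y / (1 + y) ^ (t + 2)) y :=
    fun y hy => hasDerivAt_gfun (by omega) (by positivity)
  have hcont : ContinuousOn (gfun t) (Icc 0 1) :=
    fun y hy => (hderiv y hy.1).continuousAt.continuousWithinAt
  have hz₀ : 0 < z := (one_div_pos.2 (by linarith)).trans hz.1
  have hz₁ : z < 1 := hz.2.trans_le (by rw [div_le_one] <;> linarith)
  refine ⟨z, hz, ?_, ?_⟩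
  · refine strictMonoOn_of_deriv_pos (convex_Icc 0 z)
      (hcont.mono (Icc_subset_Icc le_rfl hz₁.le)) fun y hy => ?_
    rw [interior_Icc] at hy
    rw [(hderiv y hy.1.le).deriv]
    have := hy.1
    exact div_pos (mul_pos (by positivity) (hpos y ⟨hy.1.le, hy.2⟩)) (by positivity)
  · refine strictAntiOn_of_deriv_neg (convex_Icc z 1)
      (hcont.mono (Icc_subset_Icc hz₀.le le_rfl)) fun y hy => ?_
    rw [interior_Icc] at hy
    have hy₀ : 0 < y := hz₀.trans hy.1
    rw [(hderiv y hy₀.le).deriv]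
    exact div_neg_of_neg_of_pos (mul_neg_of_pos_of_neg (by positivity) (hneg y hy))
      (by positivity)

noncomputable def xOfY (y : ℝ) : ℝ := 2 * y / (1 + y) ^ 2

noncomputable def yOfX (x : ℝ) : ℝ := (1 - √(1 - 2 * x)) / (1 + √(1 - 2 * x))

lemma yOfX_zero : yOfX 0 = 0 := by simp [yOfX]

lemma yOfX_half : yOfX (1 / 2) = 1 := by simp [yOfX]

lemma yOfX_xOfY {y : ℝ} (hy₀ : -1 < y) (hy₁ : y ≤ 1) : yOfX (xOfY y) = y := by
  have h1y : 0 < 1 + y := by linarith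
  have hsqrt : √(1 - 2 * xOfY y) = (1 - y) / (1 + y) := by
    rw [← Real.sqrt_sq (div_nonneg (by linarith) h1y.le)]
    congr 1
    simp only [xOfY]
    field_simp
    ring
  rw [yOfX, hsqrt]
  field_simp
  ring

lemma xOfY_le_half (y : ℝ) : xOfY y ≤ 1 / 2 := by
  rcases eq_or_ne (1 + y) 0 with h | h
  · simp [xOfY, h]
  · rw [xOfY, div_le_iff₀ (by positivity)]
    nlinarith [sq_nonneg (1 - y)]

lemma xOfY_strictMonoOn : StrictMonoOn xOfY (Icc 0 1) := by
  intro a ha b hb hab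
  rw [xOfY, xOfY, div_lt_div_iff₀ (by nlinarith [ha.1]) (by nlinarith [hb.1])]
  have : a * b < 1 := by nlinarith [ha.1, hb.2]
  nlinarith [mul_pos (sub_pos.2 hab) (sub_pos.2 this)]

lemma yOfX_strictMonoOn : StrictMonoOn yOfX (Iic (1 / 2)) := by
  intro a ha b hb hab
  have hlt : √(1 - 2 * b) < √(1 - 2 * a) :=
    Real.sqrt_lt_sqrt (by linarith [show b ≤ 1 / 2 from hb]) (by linarith)
  have := Real.sqrt_nonneg (1 - 2 * b)
  rw [yOfX, yOfX, div_lt_div_iff₀ (by positivity) (by positivity)]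
  nlinarith

lemma sfun_eq_gfun_yOfX {t : ℕ} (ht : 1 ≤ t) {x : ℝ} (hx : x ≤ 1 / 2) :
    sfun t x = gfun t (yOfX x) := by
  obtain ⟨n, rfl⟩ : ∃ n, t = n + 1 := ⟨t - 1, by omega⟩
  have hs : √(1 - 2 * x) ^ 2 = 1 - 2 * x := Real.sq_sqrt (by linarith)
  have hs₀ := Real.sqrt_nonneg (1 - 2 * x)
  have hx' : x = (1 - √(1 - 2 * x) ^ 2) / 2 := by linarith
  rw [sfun, gfun, yOfX, Nat.add_sub_cancel]
  generalize √(1 - 2 * x) = s at *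
  subst hx'
  have : 1 + s ≠ 0 := by positivity
  have h1 : 1 + (1 - s) / (1 + s) = 2 / (1 + s) := by field_simp; ring
  rw [h1, div_pow, div_pow]
  field_simp
  ring

lemma xOfY_mem_Ioo {t : ℝ} (ht : 2 ≤ t) {y : ℝ} (hy : y ∈ Ioo (1 / t) (1 / (t - 1))) :
    xOfY y ∈ Ioo (2 * t / (t + 1) ^ 2) (2 / (t + 1)) := by
  have hy₀ : 0 ≤ y := (one_div_pos.2 (by linarith)).le.trans hy.1.le
  have hinv : 1 / (t - 1) ≤ 1 := by rw [div_le_one] <;> linarith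
  have hlow : xOfY (1 / t) = 2 * t / (t + 1) ^ 2 := by
    simp only [xOfY]
    field_simp
  have hup : xOfY (1 / (t - 1)) ≤ 2 / (t + 1) := by
    have : t - 1 ≠ 0 := by linarith
    have : xOfY (1 / (t - 1)) = 2 * (t - 1) / t ^ 2 := by
      simp only [xOfY]
      field_simp
      ring_nf
      field_simp
    rw [this, div_le_div_iff₀ (by positivity) (by positivity)]
    nlinarith
  constructor
  · rw [← hlow]
    exact xOfY_strictMonoOn ⟨by positivity, by rw [div_le_one] <;> linarith⟩
      ⟨hy₀, hy.2.le.trans hinv⟩ hy.1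
  · exact (xOfY_strictMonoOn ⟨hy₀, hy.2.le.trans hinv⟩
      ⟨hy₀.trans hy.2.le, hinv⟩ hy.2).trans_le hup

lemma strictMonoOn_sfun {t : ℕ} (ht : 1 ≤ t) {z : ℝ} (hz₀ : -1 < z) (hz₁ : z ≤ 1)
    (hg : StrictMonoOn (gfun t) (Icc 0 z)) : StrictMonoOn (sfun t) (Icc 0 (xOfY z)) := by
  have hsub : Icc 0 (xOfY z) ⊆ Iic (1 / 2) := fun x hx => hx.2.trans (xOfY_le_half z)
  have hmaps : MapsTo yOfX (Icc 0 (xOfY z)) (Icc 0 z) := by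
    simpa only [yOfX_zero, yOfX_xOfY hz₀ hz₁] using
      (yOfX_strictMonoOn.monotoneOn.mono hsub).mapsTo_Icc
  exact (hg.comp (yOfX_strictMonoOn.mono hsub) hmaps).congr
    fun x hx => (sfun_eq_gfun_yOfX ht (hsub hx)).symm

lemma strictAntiOn_sfun {t : ℕ} (ht : 1 ≤ t) {z : ℝ} (hz₀ : -1 < z) (hz₁ : z ≤ 1)
    (hg : StrictAntiOn (gfun t) (Icc z 1)) : StrictAntiOn (sfun t) (Icc (xOfY z) (1 / 2)) := by
  have hsub : Icc (xOfY z) (1 / 2) ⊆ Iic (1 / 2) := fun x hx => hx.2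
  have hmaps : MapsTo yOfX (Icc (xOfY z) (1 / 2)) (Icc z 1) := by
    simpa only [yOfX_half, yOfX_xOfY hz₀ hz₁] using
      (yOfX_strictMonoOn.monotoneOn.mono hsub).mapsTo_Icc
  exact (hg.comp_strictMonoOn (yOfX_strictMonoOn.mono hsub) hmaps).congr
    fun x hx => (sfun_eq_gfun_yOfX ht hx.2).symm

/-- For every `t ≥ 4` there is a unique `x*(t) ∈ (2t/(t+1)², 2/(t+1))` such that
`s_t` is strictly increasing on `[0, x*(t)]` and strictly decreasing on `[x*(t), 1/2]`. -/
theorem stmt14 (t : ℕ) (ht : 4 ≤ t) :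
    ∃! xs : ℝ, xs ∈ Set.Ioo (2 * (t : ℝ) / ((t : ℝ) + 1) ^ 2) (2 / ((t : ℝ) + 1)) ∧
      StrictMonoOn (sfun t) (Set.Icc 0 xs) ∧
      StrictAntiOn (sfun t) (Set.Icc xs (1 / 2)) := by
  obtain ⟨z, hz, hmono, hanti⟩ := exists_gfun_strictMonoOn_strictAntiOn ht
  have ht' : (4:ℝ) ≤ t := by exact_mod_cast ht
  have hz₀ : -1 < z := by linarith [(one_div_pos.2 (by linarith : (0:ℝ) < t)).trans hz.1]
  have hz₁ : z ≤ 1 := hz.2.le.trans (by rw [div_le_one] <;> linarith)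
  have hxs := xOfY_mem_Ioo (by linarith) hz
  have hsmono := strictMonoOn_sfun (by omega) hz₀ hz₁ hmono
  have hsanti := strictAntiOn_sfun (by omega) hz₀ hz₁ hanti
  have hsub : Ioo (2 * (t : ℝ) / ((t : ℝ) + 1) ^ 2) (2 / ((t : ℝ) + 1)) ⊆ Icc 0 (1 / 2) :=
    fun x hx => ⟨(by positivity : (0:ℝ) ≤ _).trans hx.1.le,
      hx.2.le.trans (by rw [div_le_div_iff₀] <;> linarith)⟩
  refine ⟨xOfY z, ⟨hxs, hsmono, hsanti⟩, fun x hx => ?_⟩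
  exact eq_of_strictMonoOn_of_strictAntiOn (hsub hx.1) (hsub hxs) hx.2.1 hx.2.2 hsmono hsanti
end
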